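/- arXiv:2412.20721 — 4 statements merged into one kernel-verified Lean document; each statement's English description precedes it below -/
import Mathlib

section
/- For every integer d ≥ 3 and every ε > 0 there exists N such that every d-regular finite simple graph G on n ≥ N vertices satisfies λ_2(A_G) ≥ 2√(d−1) − ε, where λ_2 denotes the second largest eigenvalue (with multiplicity) of the adjacency matrix of G. In particular, G has a nontrivial adjacency eigenvalue of absolute value at least 2√(d−1) − ε. -/
open Polynomial Matrix

/-- A real polynomial is real-rooted if all of its complex roots are real. -/
def RealRooted (p : Polynomial ℝ) : Prop :=
  ∀ z : ℂ, (p.map (algebraMap ℝ ℂ)).IsRoot z → z.im = 0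

/-- The `i`-th largest real root (counted with multiplicity, indexed from `i = 1`)
of a real polynomial, with junk value `0` if out of range. -/
noncomputable def nthLargestRoot (p : Polynomial ℝ) (i : ℕ) : ℝ :=
  ((p.roots.sort (· ≤ ·)).reverse).getD (i - 1) 0

/-- The `i`-th largest eigenvalue (counted with multiplicity, indexed from `i = 1`)
of a square real matrix, defined via the roots of its characteristic polynomial.
For a real symmetric matrix the characteristic polynomial splits over `ℝ`,
so this lists all eigenvalues in decreasing order. -/
noncomputable def nthLargestEigenvalue {m : Type*} [Fintype m] [DecidableEq m]
    (A : Matrix m m ℝ) (i : ℕ) : ℝ :=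
  nthLargestRoot A.charpoly i

set_option linter.unusedSectionVars false
set_option maxHeartbeats 1000000

namespace AB

lemma charpoly_eq_prod {n : ℕ} {A : Matrix (Fin n) (Fin n) ℝ} (hA : A.IsHermitian) :
    A.charpoly = ∏ i, (X - C (hA.eigenvalues i)) := by
  set U : Matrix (Fin n) (Fin n) ℝ := (hA.eigenvectorUnitary : Matrix (Fin n) (Fin n) ℝ) with hUdef
  have hU : U * star U = 1 := (Matrix.mem_unitaryGroup_iff).mp hA.eigenvectorUnitary.2
  have hA' : A = U * diagonal hA.eigenvalues * star U := by
    have := hA.spectral_theorem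
    simpa using this
  have hmapone : (U.map C) * ((star U).map C) = 1 := by
    rw [← Matrix.map_mul, hU]; simp
  have hcomm : ∀ M : Matrix (Fin n) (Fin n) ℝ[X],
      (Matrix.scalar (Fin n)) X * M = M * (Matrix.scalar (Fin n)) X :=
    fun M => Matrix.scalar_commute X (fun r' => by exact mul_comm X r') M
  have hchar : charmatrix A = (U.map C) * (charmatrix (diagonal hA.eigenvalues)) * ((star U).map C) := by
    rw [charmatrix, charmatrix, RingHom.mapMatrix_apply, RingHom.mapMatrix_apply]
    rw [mul_sub, sub_mul]
    congr 1
    · rw [← hcomm, mul_assoc, hmapone, mul_one]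
    · rw [← Matrix.map_mul, ← Matrix.map_mul, ← hA']
  have hdiag : charmatrix (diagonal hA.eigenvalues) = diagonal (fun i => X - C (hA.eigenvalues i)) := by
    ext i j
    by_cases h : i = j
    · subst h; simp [charmatrix_apply_eq]
    · simp [charmatrix_apply_ne _ _ _ h, diagonal_apply_ne _ h, diagonal_apply_ne]
  rw [Matrix.charpoly, hchar, det_mul_right_comm, ← Matrix.map_mul, hU]
  simp [hdiag, det_diagonal]

lemma roots_charpoly {n : ℕ} {A : Matrix (Fin n) (Fin n) ℝ} (hA : A.IsHermitian) :
    A.charpoly.roots = Multiset.map hA.eigenvalues Finset.univ.val := by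
  rw [charpoly_eq_prod hA]
  have : (∏ i, (X - C (hA.eigenvalues i))) =
      (Multiset.map (fun a => X - C a) (Multiset.map hA.eigenvalues Finset.univ.val)).prod := by
    rw [Multiset.map_map]; rfl
  rw [this, Polynomial.roots_multiset_prod_X_sub_C]

lemma le_second_of_two {p : Multiset ℝ} {c : ℝ}
    (h2 : 2 ≤ Multiset.countP (fun x => c ≤ x) p) :
    c ≤ ((p.sort (· ≤ ·)).reverse).getD 1 0 := by
  classical
  set l := p.sort (· ≤ ·) with hl
  have hsort : l.Pairwise (· ≤ ·) := Multiset.pairwise_sort (s := p) (r := (· ≤ ·))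
  have hcount : 2 ≤ List.countP (fun x => decide (c ≤ x)) l := by
    have : (l : Multiset ℝ) = p := Multiset.sort_eq (s := p) (r := (· ≤ ·))
    rw [← this] at h2
    simpa [Multiset.coe_countP] using h2
  have hlen : 2 ≤ l.length := le_trans hcount List.countP_le_length
  have h1 : 1 < l.reverse.length := by simpa using by omega
  rw [List.getD_eq_getElem _ _ h1, List.getElem_reverse]
  by_contra hlt
  push_neg at hlt
  -- every element of take (l.length - 1) is ≤ l[l.length - 1 - 1] < c
  have hidx : l.length - 1 - 1 < l.length := by omega
  have htake : List.countP (fun x => decide (c ≤ x)) (l.take (l.length - 1)) = 0 := by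
    rw [List.countP_eq_zero]
    intro a ha
    obtain ⟨i, hi, rfl⟩ := List.getElem_of_mem ha
    have hi' : i < l.length := by
      have := hi; rw [List.length_take] at this; omega
    rw [List.getElem_take]
    have hle : l[i] ≤ l[l.length - 1 - 1] := by
      have hi2 : i ≤ l.length - 1 - 1 := by
        have := hi; rw [List.length_take] at this; omega
      have := hsort.rel_get_of_le (a := ⟨i, hi'⟩) (b := ⟨l.length - 1 - 1, hidx⟩) (by simpa using hi2)
      simpa using this
    simp only [decide_eq_true_eq]
    intro hc
    exact absurd (le_trans hc hle) (not_le.mpr hlt)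
  have hdrop : List.countP (fun x => decide (c ≤ x)) (l.drop (l.length - 1)) ≤ 1 := by
    refine le_trans List.countP_le_length ?_
    rw [List.length_drop]; omega
  have := List.countP_append (p := fun x => decide (c ≤ x)) (l₁ := l.take (l.length - 1)) (l₂ := l.drop (l.length - 1))
  rw [List.take_append_drop] at this
  omega

lemma core {n : ℕ} {A : Matrix (Fin n) (Fin n) ℝ} (hA : A.IsHermitian)
    {c μ : ℝ} (hcμ : c ≤ μ) {v h : Fin n → ℝ} (hv : v ≠ 0)
    (hAv : A *ᵥ v = μ • v) (hh : h ≠ 0) (hor : h ⬝ᵥ v = 0)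
    (hray : c * (h ⬝ᵥ h) ≤ h ⬝ᵥ (A *ᵥ h)) :
    c ≤ nthLargestEigenvalue A 2 := by
  classical
  set B := hA.eigenvectorBasis with hB
  set ev := hA.eigenvalues with hev
  -- dot product = inner
  have hid : ∀ x y : EuclideanSpace ℝ (Fin n), @inner ℝ _ _ x y = (x : Fin n → ℝ) ⬝ᵥ (y : Fin n → ℝ) := by
    intro x y
    rw [PiLp.inner_apply]
    simp [dotProduct, RCLike.inner_apply, mul_comm]
  have hAt : Aᵀ = A := by
    have := hA.eq
    rwa [conjTranspose_eq_transpose_of_trivial] at this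
  have hkey : ∀ x : Fin n → ℝ, x ᵥ* A = A *ᵥ x := by
    intro x
    conv_lhs => rw [← hAt]
    exact vecMul_transpose A x
  have hsymm : ∀ (i : Fin n) (w : Fin n → ℝ),
      ⇑(B i) ⬝ᵥ (A *ᵥ w) = ev i * (⇑(B i) ⬝ᵥ w) := by
    intro i w
    rw [dotProduct_mulVec, hkey, hA.mulVec_eigenvectorBasis, smul_dotProduct]
    rfl
  -- Parseval
  have hpar : ∀ x y : Fin n → ℝ, x ⬝ᵥ y = ∑ i, (⇑(B i) ⬝ᵥ x) * (⇑(B i) ⬝ᵥ y) := by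
    intro x y
    have := B.sum_inner_mul_inner (E := EuclideanSpace ℝ (Fin n)) (WithLp.toLp 2 x) (WithLp.toLp 2 y)
    rw [hid] at this
    change _ = x ⬝ᵥ y at this
    rw [← this]
    congr 1
    funext i
    rw [hid, hid]
    exact congrArg₂ (· * ·) (dotProduct_comm _ _) rfl
  have hzero : ∀ x : Fin n → ℝ, (∀ i, ⇑(B i) ⬝ᵥ x = 0) → x = 0 := by
    intro x hx
    have : x ⬝ᵥ x = 0 := by
      rw [hpar x x]
      apply Finset.sum_eq_zero
      intro i _
      rw [hx i, mul_zero]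
    exact dotProduct_self_eq_zero.mp this
  -- reduce to counting
  suffices hcnt : 2 ≤ Multiset.countP (fun x => c ≤ x) A.charpoly.roots by
    unfold nthLargestEigenvalue nthLargestRoot
    exact le_second_of_two hcnt
  rw [roots_charpoly hA]
  rw [Multiset.countP_map]
  have : Multiset.filter (fun a => c ≤ hA.eigenvalues a) Finset.univ.val
      = (Finset.univ.filter (fun a => c ≤ ev a)).val := rfl
  rw [this]
  show 2 ≤ (Finset.univ.filter (fun a => c ≤ ev a)).card
  by_contra hcard
  push_neg at hcard
  have hcard1 : (Finset.univ.filter (fun a => c ≤ ev a)).card ≤ 1 := by omega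
  -- v has a nonzero coefficient
  have hex : ∃ i, ⇑(B i) ⬝ᵥ v ≠ 0 := by
    by_contra hall
    push_neg at hall
    exact hv (hzero v hall)
  obtain ⟨i₀, hi₀⟩ := hex
  have hev_eq : ∀ i, (ev i - μ) * (⇑(B i) ⬝ᵥ v) = 0 := by
    intro i
    have h1 := hsymm i v
    rw [hAv, dotProduct_smul] at h1
    have : μ * (⇑(B i) ⬝ᵥ v) = ev i * (⇑(B i) ⬝ᵥ v) := h1
    ring_nf
    nlinarith [this]
  have hμi₀ : ev i₀ = μ := by
    have := hev_eq i₀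
    rcases mul_eq_zero.mp this with h1 | h1
    · linarith [sub_eq_zero.mp h1]
    · exact absurd h1 hi₀
  have hi₀mem : i₀ ∈ Finset.univ.filter (fun a => c ≤ ev a) := by
    simp [hμi₀, hcμ]
  have hfilter_eq : Finset.univ.filter (fun a => c ≤ ev a) = {i₀} := by
    apply Finset.eq_singleton_iff_unique_mem.mpr
    refine ⟨hi₀mem, fun x hx => ?_⟩
    by_contra hne
    have : 2 ≤ (Finset.univ.filter (fun a => c ≤ ev a)).card := by
      have : ({x, i₀} : Finset (Fin n)) ⊆ Finset.univ.filter (fun a => c ≤ ev a) := by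
        intro y hy
        rcases Finset.mem_insert.mp hy with rfl | hy
        · exact hx
        · rwa [Finset.mem_singleton.mp hy]
      calc 2 = ({x, i₀} : Finset (Fin n)).card := by rw [Finset.card_insert_of_notMem (by simpa using hne), Finset.card_singleton]
      _ ≤ _ := Finset.card_le_card this
    omega
  have hlt : ∀ i, i ≠ i₀ → ev i < c := by
    intro i hne
    by_contra hge
    push_neg at hge
    have : i ∈ Finset.univ.filter (fun a => c ≤ ev a) := by simp [hge]
    rw [hfilter_eq, Finset.mem_singleton] at this
    exact hne this
  -- coefficient of h at i₀ vanishes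
  have hvcoef : ∀ i, i ≠ i₀ → ⇑(B i) ⬝ᵥ v = 0 := by
    intro i hne
    have := hev_eq i
    rcases mul_eq_zero.mp this with h1 | h1
    · exfalso
      have : ev i = μ := by linarith [sub_eq_zero.mp h1]
      have : c ≤ ev i := this ▸ hcμ
      exact absurd this (not_le.mpr (hlt i hne))
    · exact h1
  have hcoef₀ : ⇑(B i₀) ⬝ᵥ h = 0 := by
    have h1 : h ⬝ᵥ v = (⇑(B i₀) ⬝ᵥ h) * (⇑(B i₀) ⬝ᵥ v) := by
      rw [hpar h v]
      rw [Finset.sum_eq_single i₀]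
      · intro i _ hne
        rw [hvcoef i hne, mul_zero]
      · intro habs
        exact absurd (Finset.mem_univ i₀) habs
    rw [hor] at h1
    rcases mul_eq_zero.mp h1.symm with h2 | h2
    · exact h2
    · exact absurd h2 hi₀
  -- Rayleigh contradiction
  have hexp : h ⬝ᵥ (A *ᵥ h) = ∑ i, ev i * (⇑(B i) ⬝ᵥ h)^2 := by
    rw [hpar h (A *ᵥ h)]
    congr 1
    funext i
    rw [hsymm i h]
    ring
  have hnorm : h ⬝ᵥ h = ∑ i, (⇑(B i) ⬝ᵥ h)^2 := by
    rw [hpar h h]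
    congr 1
    funext i
    ring
  have hsum : 0 ≤ ∑ i, (ev i - c) * (⇑(B i) ⬝ᵥ h)^2 := by
    have : ∑ i, (ev i - c) * (⇑(B i) ⬝ᵥ h)^2
        = h ⬝ᵥ (A *ᵥ h) - c * (h ⬝ᵥ h) := by
      rw [hexp, hnorm, Finset.mul_sum, ← Finset.sum_sub_distrib]
      congr 1; funext i; ring
    rw [this]
    linarith
  have hterms : ∀ i ∈ Finset.univ, (ev i - c) * (⇑(B i) ⬝ᵥ h)^2 ≤ 0 := by
    intro i _
    by_cases hne : i = i₀
    · subst hne; rw [hcoef₀]; simp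
    · have := hlt i hne
      nlinarith [sq_nonneg (⇑(B i) ⬝ᵥ h)]
  have hsumzero : ∑ i, (ev i - c) * (⇑(B i) ⬝ᵥ h)^2 = 0 :=
    le_antisymm (Finset.sum_nonpos hterms) hsum
  have hallzero : ∀ i, ⇑(B i) ⬝ᵥ h = 0 := by
    intro i
    by_cases hne : i = i₀
    · subst hne; exact hcoef₀
    · have := (Finset.sum_eq_zero_iff_of_nonpos hterms).mp hsumzero i (Finset.mem_univ i)
      have hlt' := hlt i hne
      have : (⇑(B i) ⬝ᵥ h)^2 = 0 := by
        rcases mul_eq_zero.mp this with h1 | h1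
        · exfalso; nlinarith
        · exact h1
      exact pow_eq_zero_iff (n := 2) (by norm_num) |>.mp this
  exact hh (hzero h hallzero)

variable {n : ℕ} (G : SimpleGraph (Fin n)) [DecidableRel G.Adj]

/-- penultimate vertex on a shortest walk -/
lemma penult {w x : Fin n} {i : ℕ} (h : G.edist w x = (i+1 : ℕ)) :
    ∃ y, G.Adj x y ∧ G.edist w y ≤ (i : ℕ∞) := by
  obtain ⟨p, hp⟩ := SimpleGraph.exists_walk_of_edist_eq_coe h
  cases hrev : p.reverse with
  | nil =>
      exfalso
      have := congrArg SimpleGraph.Walk.length hrev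
      rw [SimpleGraph.Walk.length_reverse] at this
      simp [hp] at this
  | cons hadj q =>
      refine ⟨_, hadj, ?_⟩
      have hlen : q.length = i := by
        have := congrArg SimpleGraph.Walk.length hrev
        rw [SimpleGraph.Walk.length_reverse] at this
        simp [hp] at this
        omega
      calc G.edist w _ = G.edist _ w := SimpleGraph.edist_comm
      _ ≤ q.length := SimpleGraph.edist_le q
      _ = (i : ℕ∞) := by rw [hlen]

variable {u₁ u₂ : Fin n}

/-- distance to the edge {u₁,u₂} -/
noncomputable def rho (G : SimpleGraph (Fin n)) (u₁ u₂ x : Fin n) : ℕ∞ :=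
  min (G.edist u₁ x) (G.edist u₂ x)

lemma rho_u₁ : rho G u₁ u₂ u₁ = 0 := by simp [rho, SimpleGraph.edist_self]
lemma rho_u₂ : rho G u₁ u₂ u₂ = 0 := by simp [rho, SimpleGraph.edist_self]

lemma rho_step {x y : Fin n} (hxy : G.Adj x y) :
    rho G u₁ u₂ y ≤ rho G u₁ u₂ x + 1 := by
  have h1 : G.edist u₁ y ≤ G.edist u₁ x + 1 := by
    calc G.edist u₁ y ≤ G.edist u₁ x + G.edist x y := SimpleGraph.edist_triangle
    _ = G.edist u₁ x + 1 := by rw [SimpleGraph.edist_eq_one_iff_adj.mpr hxy]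
  have h2 : G.edist u₂ y ≤ G.edist u₂ x + 1 := by
    calc G.edist u₂ y ≤ G.edist u₂ x + G.edist x y := SimpleGraph.edist_triangle
    _ = G.edist u₂ x + 1 := by rw [SimpleGraph.edist_eq_one_iff_adj.mpr hxy]
  rcases min_cases (G.edist u₁ x) (G.edist u₂ x) with ⟨hm, _⟩ | ⟨hm, _⟩ <;>
    simp only [rho, hm] <;> [exact le_trans (min_le_left _ _) h1;
      exact le_trans (min_le_right _ _) h2]

lemma rho_down {x : Fin n} {i : ℕ} (hx : rho G u₁ u₂ x = (i+1 : ℕ)) :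
    ∃ y, G.Adj x y ∧ rho G u₁ u₂ y = (i : ℕ∞) := by
  have : G.edist u₁ x = ((i+1 : ℕ) : ℕ∞) ∨ G.edist u₂ x = ((i+1 : ℕ) : ℕ∞) := by
    rcases min_cases (G.edist u₁ x) (G.edist u₂ x) with ⟨hm, _⟩ | ⟨hm, _⟩
    · left; rw [← hx, rho, hm]
    · right; rw [← hx, rho, hm]
    
  have hex : ∃ y, G.Adj x y ∧ rho G u₁ u₂ y ≤ (i : ℕ∞) := by
    rcases this with h | h
    · obtain ⟨y, hy, hle⟩ := penult G h
      exact ⟨y, hy, le_trans (min_le_left _ _) hle⟩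
    · obtain ⟨y, hy, hle⟩ := penult G h
      exact ⟨y, hy, le_trans (min_le_right _ _) hle⟩
  obtain ⟨y, hy, hle⟩ := hex
  refine ⟨y, hy, le_antisymm hle ?_⟩
  -- rho x ≤ rho y + 1 gives i ≤ rho y
  have hst := rho_step G hy.symm (u₁ := u₁) (u₂ := u₂)
  rw [hx] at hst
  by_contra hlt
  push_neg at hlt
  have h2 : rho G u₁ u₂ y + 1 ≤ (i : ℕ∞) := ENat.add_one_le_iff (by
    intro htop; rw [htop] at hlt; exact absurd le_top (not_le.mpr hlt)) |>.mpr hlt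
  have hfin : ((i+1:ℕ) : ℕ∞) ≤ (i : ℕ∞) := le_trans hst h2
  have : i + 1 ≤ i := by exact_mod_cast hfin
  omega

/-- a neighbor no farther out -/
lemma rho_exists_peer (hadj : G.Adj u₁ u₂) {x : Fin n} (hx : rho G u₁ u₂ x ≠ ⊤) :
    ∃ y, G.Adj x y ∧ rho G u₁ u₂ y ≤ rho G u₁ u₂ x := by
  obtain ⟨m, hm⟩ := (WithTop.ne_top_iff_exists.mp hx)
  cases m with
  | zero =>
      -- x = u₁ or u₂
      have h0 : rho G u₁ u₂ x = 0 := by exact_mod_cast hm.symm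
      have : G.edist u₁ x = 0 ∨ G.edist u₂ x = 0 := by
        simp only [rho] at h0
        rcases min_cases (G.edist u₁ x) (G.edist u₂ x) with ⟨hm', _⟩ | ⟨hm', _⟩
        · left; rw [hm'] at h0; exact h0
        · right; rw [hm'] at h0; exact h0
      rcases this with h | h
      · have hx1 : x = u₁ := (SimpleGraph.edist_eq_zero_iff.mp h).symm
        subst hx1
        exact ⟨u₂, hadj, by rw [rho_u₂]; exact zero_le⟩
      · have hx2 : x = u₂ := (SimpleGraph.edist_eq_zero_iff.mp h).symm
        subst hx2
        exact ⟨u₁, hadj.symm, by rw [rho_u₁]; exact zero_le⟩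
  | succ i =>
      obtain ⟨y, hy, hrho⟩ := rho_down G hm.symm
      refine ⟨y, hy, ?_⟩
      rw [hrho]
      calc (i : ℕ∞) ≤ ((i+1 : ℕ) : ℕ∞) := by exact_mod_cast Nat.le_succ i
      _ = rho G u₁ u₂ x := hm

variable {d : ℕ}

lemma count_up (hreg : G.IsRegularOfDegree d) (hadj : G.Adj u₁ u₂) {x : Fin n}
    (hx : rho G u₁ u₂ x ≠ ⊤) :
    (((G.neighborFinset x)).filter
      (fun y => rho G u₁ u₂ x < rho G u₁ u₂ y)).card < d := by
  classical
  obtain ⟨y₀, hy₀, hle⟩ := rho_exists_peer G hadj hx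
  have hy₀mem : y₀ ∈ G.neighborFinset x := (SimpleGraph.mem_neighborFinset G x y₀).mpr hy₀
  have hy₀not : y₀ ∉ ((G.neighborFinset x)).filter
      (fun y => rho G u₁ u₂ x < rho G u₁ u₂ y) := by
    simp only [Finset.mem_filter, not_and, not_lt]
    intro _
    exact hle
  have hss : ((G.neighborFinset x)).filter (fun y => rho G u₁ u₂ x < rho G u₁ u₂ y)
      ⊂ G.neighborFinset x :=
    Finset.ssubset_iff_of_subset (Finset.filter_subset _ _) |>.mpr ⟨y₀, hy₀mem, hy₀not⟩
  have := Finset.card_lt_card hss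
  rwa [← SimpleGraph.degree, hreg x] at this

lemma sphere_growth (hreg : G.IsRegularOfDegree d) (hadj : G.Adj u₁ u₂) (i : ℕ) :
    (((Finset.univ : Finset (Fin n))).filter
        (fun x => rho G u₁ u₂ x = ((i+1:ℕ) : ℕ∞))).card
      ≤ (d-1) * (((Finset.univ : Finset (Fin n))).filter
        (fun x => rho G u₁ u₂ x = ((i:ℕ) : ℕ∞))).card := by
  classical
  set Vi := ((Finset.univ : Finset (Fin n))).filter (fun x => rho G u₁ u₂ x = ((i:ℕ) : ℕ∞))
  set Vs := ((Finset.univ : Finset (Fin n))).filter (fun x => rho G u₁ u₂ x = ((i+1:ℕ) : ℕ∞))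
  have hsub : Vs ⊆ Vi.biUnion (fun y => (G.neighborFinset y).filter
      (fun z => rho G u₁ u₂ y < rho G u₁ u₂ z)) := by
    intro z hz
    have hz' : rho G u₁ u₂ z = ((i+1:ℕ) : ℕ∞) := (Finset.mem_filter.mp hz).2
    obtain ⟨y, hy, hrho⟩ := rho_down G hz'
    refine Finset.mem_biUnion.mpr ⟨y, ?_, ?_⟩
    · exact Finset.mem_filter.mpr ⟨Finset.mem_univ _, hrho⟩
    · refine Finset.mem_filter.mpr ⟨(SimpleGraph.mem_neighborFinset G y z).mpr hy.symm, ?_⟩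
      rw [hrho, hz']
      exact_mod_cast Nat.lt_succ_self i
  calc Vs.card ≤ _ := Finset.card_le_card hsub
  _ ≤ ∑ y ∈ Vi, ((G.neighborFinset y).filter
      (fun z => rho G u₁ u₂ y < rho G u₁ u₂ z)).card := Finset.card_biUnion_le
  _ ≤ ∑ _y ∈ Vi, (d-1) := by
      apply Finset.sum_le_sum
      intro y hy
      have hyfin : rho G u₁ u₂ y ≠ ⊤ := by
        rw [(Finset.mem_filter.mp hy).2]
        exact ENat.coe_ne_top i
      have := count_up G hreg hadj hyfin
      omega
  _ = (d-1) * Vi.card := by rw [Finset.sum_const, smul_eq_mul, mul_comm]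

lemma ball_bound (hreg : G.IsRegularOfDegree d) (u : Fin n) (r : ℕ) :
    (((Finset.univ : Finset (Fin n))).filter
      (fun x => G.edist u x ≤ (r : ℕ∞))).card ≤ (d+1)^r := by
  classical
  induction r with
  | zero =>
      have hsub : ((Finset.univ : Finset (Fin n))).filter
          (fun x => G.edist u x ≤ ((0:ℕ) : ℕ∞)) ⊆ {u} := by
        intro x hx
        have := (Finset.mem_filter.mp hx).2
        have h0 : G.edist u x = 0 := le_antisymm (by exact_mod_cast this) zero_le
        have := SimpleGraph.edist_eq_zero_iff.mp h0
        simp [this]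
      calc _ ≤ ({u} : Finset (Fin n)).card := Finset.card_le_card hsub
      _ = 1 := Finset.card_singleton u
      _ ≤ (d+1)^0 := by norm_num
  | succ r ih =>
      set Br := ((Finset.univ : Finset (Fin n))).filter (fun x => G.edist u x ≤ (r : ℕ∞))
      have hsub : ((Finset.univ : Finset (Fin n))).filter
          (fun x => G.edist u x ≤ ((r+1:ℕ) : ℕ∞))
          ⊆ Br ∪ Br.biUnion (fun y => G.neighborFinset y) := by
        intro x hx
        have hx' := (Finset.mem_filter.mp hx).2
        by_cases hle : G.edist u x ≤ (r : ℕ∞)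
        · exact Finset.mem_union_left _ (Finset.mem_filter.mpr ⟨Finset.mem_univ _, hle⟩)
        · have heq : G.edist u x = ((r+1:ℕ) : ℕ∞) := by
            refine le_antisymm hx' ?_
            push_neg at hle
            have : (r : ℕ∞) + 1 ≤ G.edist u x := ENat.add_one_le_iff (ENat.coe_ne_top r) |>.mpr hle
            exact_mod_cast this
          obtain ⟨y, hy, hley⟩ := penult G heq
          refine Finset.mem_union_right _ (Finset.mem_biUnion.mpr ⟨y, ?_, ?_⟩)
          · exact Finset.mem_filter.mpr ⟨Finset.mem_univ _, hley⟩
          · exact (SimpleGraph.mem_neighborFinset G y x).mpr hy.symm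
      calc _ ≤ (Br ∪ Br.biUnion (fun y => G.neighborFinset y)).card :=
            Finset.card_le_card hsub
      _ ≤ Br.card + (Br.biUnion (fun y => G.neighborFinset y)).card := Finset.card_union_le _ _
      _ ≤ Br.card + ∑ y ∈ Br, (G.neighborFinset y).card :=
            Nat.add_le_add_left Finset.card_biUnion_le _
      _ = Br.card + ∑ y ∈ Br, d := by
            congr 1
            apply Finset.sum_congr rfl
            intro y _
            exact hreg y
      _ = (d+1) * Br.card := by rw [Finset.sum_const, smul_eq_mul]; ring
      _ ≤ (d+1) * (d+1)^r := Nat.mul_le_mul_left _ ih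
      _ = (d+1)^(r+1) := by ring

open Finset in
lemma nilli (hd : 3 ≤ d) (hreg : G.IsRegularOfDegree d) (hadj : G.Adj u₁ u₂) (k : ℕ) :
    ∃ f : Fin n → ℝ,
      (∀ x, 0 ≤ f x) ∧ f u₁ = 1 ∧
      (∀ x, f x ≠ 0 → rho G u₁ u₂ x ≤ (k : ℕ∞)) ∧
      (2*Real.sqrt ((d:ℝ)-1) - d/(k+1)) * (f ⬝ᵥ f) ≤ f ⬝ᵥ (G.adjMatrix ℝ *ᵥ f) := by
  classical
  have hd1 : (2:ℝ) ≤ (d:ℝ) - 1 := by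
    have h3 : (3:ℝ) ≤ (d:ℝ) := by exact_mod_cast hd
    linarith
  set s : ℝ := Real.sqrt ((d:ℝ)-1) with hsdef
  have hs2 : s^2 = (d:ℝ)-1 := Real.sq_sqrt (by linarith)
  have hs1 : 1 ≤ s := by nlinarith [Real.sqrt_nonneg ((d:ℝ)-1)]
  have hspos : 0 < s := by linarith
  set q : ℝ := s⁻¹ with hqdef
  have hq0 : 0 < q := inv_pos.mpr hspos
  have hsq : s * q = 1 := mul_inv_cancel₀ (ne_of_gt hspos)
  set b : ℝ := q^2 with hbdef
  have hb0 : 0 < b := by positivity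
  have hb : ((d:ℝ)-1) * b = 1 := by
    rw [hbdef, ← hs2]
    nlinarith [hsq]
  set ρ : Fin n → ℕ∞ := rho G u₁ u₂ with hρdef
  set f : Fin n → ℝ := fun x => if ρ x ≤ (k:ℕ∞) then q ^ (ρ x).toNat else 0 with hfdef
  have hfnn : ∀ x, 0 ≤ f x := by
    intro x
    rw [hfdef]
    dsimp only
    split
    · positivity
    · exact le_rfl
  have hρu₁ : ρ u₁ = 0 := rho_u₁ G
  have hfu₁ : f u₁ = 1 := by
    rw [hfdef]
    dsimp only
    rw [hρu₁, if_pos (show (0:ℕ∞) ≤ (k:ℕ∞) from zero_le)]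
    simp
  have hsupp : ∀ x, f x ≠ 0 → ρ x ≤ (k : ℕ∞) := by
    intro x hx
    by_contra hcon
    rw [hfdef] at hx
    dsimp only at hx
    rw [if_neg hcon] at hx
    exact hx rfl
  -- f depends only on ρ
  have hfρ : ∀ x y, ρ x = ρ y → f x = f y := by
    intro x y hxy
    rw [hfdef]
    dsimp only
    rw [hxy]
  refine ⟨f, hfnn, hfu₁, hsupp, ?_⟩
  set V : ℕ → Finset (Fin n) := fun i => univ.filter (fun x => ρ x = ((i:ℕ) : ℕ∞)) with hVdef
  set aa : ℕ → ℝ := fun i => ((V i).card : ℝ) * b^i with haadef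
  -- partition helper
  have help : ∀ w : ℕ → ℝ, (∑ x, if ρ x ≤ (k:ℕ∞) then w (ρ x).toNat else 0)
      = ∑ i ∈ range (k+1), ((V i).card : ℝ) * w i := by
    intro w
    have hpoint : ∀ x : Fin n, (if ρ x ≤ (k:ℕ∞) then w (ρ x).toNat else 0)
        = ∑ i ∈ range (k+1), if ρ x = ((i:ℕ):ℕ∞) then w i else 0 := by
      intro x
      by_cases hx : ρ x ≤ (k:ℕ∞)
      · have hne : ρ x ≠ ⊤ := ne_top_of_le_ne_top (ENat.coe_ne_top k) hx
        have hxm : ρ x = (((ρ x).toNat : ℕ) : ℕ∞) := (ENat.coe_toNat hne).symm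
        set m := (ρ x).toNat with hmdef
        have hmk : m < k + 1 := by
          have h1 : ((m:ℕ):ℕ∞) ≤ ((k:ℕ):ℕ∞) := hxm ▸ hx
          have h2 : m ≤ k := by exact_mod_cast h1
          omega
        rw [if_pos hx]
        have hconds : ∀ i ∈ range (k+1),
            (if ρ x = ((i:ℕ):ℕ∞) then w i else 0) = if m = i then w i else 0 := by
          intro i _
          rw [hxm]
          by_cases hmi : m = i
          · rw [if_pos (by exact_mod_cast hmi), if_pos hmi]
          · rw [if_neg (by exact_mod_cast hmi), if_neg hmi]
        rw [Finset.sum_congr rfl hconds, Finset.sum_ite_eq, if_pos (mem_range.mpr hmk)]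
      · rw [if_neg hx]
        symm
        apply Finset.sum_eq_zero
        intro i hi
        rw [if_neg]
        intro hcon
        apply hx
        rw [hcon]
        exact_mod_cast Nat.lt_succ_iff.mp (mem_range.mp hi)
    rw [Finset.sum_congr rfl (fun x _ => hpoint x), Finset.sum_comm]
    apply Finset.sum_congr rfl
    intro i _
    rw [Finset.sum_ite, Finset.sum_const, Finset.sum_const_zero, add_zero, nsmul_eq_mul]
  have hqq2 : ∀ t : ℕ, q ^ t * q ^ t = b ^ t := by
    intro t
    rw [hbdef, ← pow_add, ← pow_mul, two_mul]
  set S : ℝ := f ⬝ᵥ f with hSdef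
  have hSa : S = ∑ i ∈ range (k+1), aa i := by
    rw [hSdef, dotProduct]
    have hpt : ∀ x : Fin n, f x * f x = if ρ x ≤ (k:ℕ∞) then b ^ (ρ x).toNat else 0 := by
      intro x
      rw [hfdef]
      dsimp only
      split
      · exact hqq2 _
      · rw [mul_zero]
    rw [Finset.sum_congr rfl (fun x _ => hpt x), help (fun t => b ^ t)]
  set T : ℝ := f ⬝ᵥ (G.adjMatrix ℝ *ᵥ f) with hTdef
  have hT : T = ∑ x, ∑ y ∈ G.neighborFinset x, f x * f y := by
    rw [hTdef, dotProduct]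
    apply Finset.sum_congr rfl
    intro x _
    rw [SimpleGraph.adjMatrix_mulVec_apply, Finset.mul_sum]
  have hNcard : ∀ x : Fin n, (G.neighborFinset x).card = d := fun x => hreg x
  -- swap lemma
  have hswap : ∀ F : Fin n → Fin n → ℝ,
      (∑ x, ∑ y ∈ G.neighborFinset x, F x y) = ∑ x, ∑ y ∈ G.neighborFinset x, F y x := by
    intro F
    have h1 : ∀ (Φ : Fin n → Fin n → ℝ) (x : Fin n),
        ∑ y ∈ G.neighborFinset x, Φ x y = ∑ y, if G.Adj x y then Φ x y else 0 := by
      intro Φ x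
      rw [SimpleGraph.neighborFinset_eq_filter, Finset.sum_filter]
    calc (∑ x, ∑ y ∈ G.neighborFinset x, F x y)
        = ∑ x, ∑ y, if G.Adj x y then F x y else 0 :=
          Finset.sum_congr rfl (fun x _ => h1 F x)
    _ = ∑ y, ∑ x, if G.Adj x y then F x y else 0 := Finset.sum_comm
    _ = ∑ y, ∑ x, if G.Adj y x then F x y else 0 := by
          apply Finset.sum_congr rfl; intro y _
          apply Finset.sum_congr rfl; intro x _
          exact if_congr (G.adj_comm x y) rfl rfl
    _ = ∑ x, ∑ y ∈ G.neighborFinset x, F y x :=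
          (Finset.sum_congr rfl (fun x _ => h1 (fun a b => F b a) x)).symm
  -- Dirichlet identity pieces
  have hdS : (∑ x, ∑ _y ∈ G.neighborFinset x, f x * f x) = (d:ℝ) * S := by
    have : ∀ x : Fin n, (∑ _y ∈ G.neighborFinset x, f x * f x) = (d:ℝ) * (f x * f x) := by
      intro x
      rw [Finset.sum_const, hNcard x, nsmul_eq_mul]
    rw [Finset.sum_congr rfl (fun x _ => this x), ← Finset.mul_sum, hSdef, dotProduct]
  set U : ℝ := ∑ x, ∑ y ∈ (G.neighborFinset x).filter (fun y => ρ x < ρ y), (f x - f y)^2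
    with hUdef
  have hDir : (d:ℝ) * S - T = U := by
    have hexp : (∑ x, ∑ y ∈ G.neighborFinset x, (f x - f y)^2)
        = (∑ x, ∑ y ∈ G.neighborFinset x, f x * f x) - 2*(∑ x, ∑ y ∈ G.neighborFinset x, f x * f y)
          + (∑ x, ∑ y ∈ G.neighborFinset x, f y * f y) := by
      rw [Finset.mul_sum, ← Finset.sum_sub_distrib, ← Finset.sum_add_distrib]
      apply Finset.sum_congr rfl
      intro x _
      rw [Finset.mul_sum, ← Finset.sum_sub_distrib, ← Finset.sum_add_distrib]
      apply Finset.sum_congr rfl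
      intro y _
      ring
    have hfy : (∑ x, ∑ y ∈ G.neighborFinset x, f y * f y)
        = (∑ x, ∑ _y ∈ G.neighborFinset x, f x * f x) := hswap (fun x y => f y * f y)
    have hsym : (∑ x, ∑ y ∈ G.neighborFinset x, (f x - f y)^2) = 2 * U := by
      have hpt : ∀ x y, G.Adj x y → (f x - f y)^2
          = (if ρ x < ρ y then (f x - f y)^2 else 0)
            + (if ρ y < ρ x then (f x - f y)^2 else 0) := by
        intro x y _
        rcases lt_trichotomy (ρ x) (ρ y) with h|h|h
        · rw [if_pos h, if_neg (asymm h), add_zero]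
        · have : f x = f y := hfρ x y h
          rw [if_neg (lt_irrefl _ ∘ (h ▸ ·)), if_neg (lt_irrefl _ ∘ (h ▸ ·))]
          rw [this]
          ring
        · rw [if_neg (asymm h), if_pos h, zero_add]
      have step1 : (∑ x, ∑ y ∈ G.neighborFinset x, (f x - f y)^2)
          = (∑ x, ∑ y ∈ G.neighborFinset x, if ρ x < ρ y then (f x - f y)^2 else 0)
            + (∑ x, ∑ y ∈ G.neighborFinset x, if ρ y < ρ x then (f x - f y)^2 else 0) := by
        rw [← Finset.sum_add_distrib]
        apply Finset.sum_congr rfl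
        intro x _
        rw [← Finset.sum_add_distrib]
        apply Finset.sum_congr rfl
        intro y hy
        exact hpt x y ((SimpleGraph.mem_neighborFinset G x y).mp hy)
      have step2 : (∑ x, ∑ y ∈ G.neighborFinset x, if ρ y < ρ x then (f x - f y)^2 else 0)
          = (∑ x, ∑ y ∈ G.neighborFinset x, if ρ x < ρ y then (f x - f y)^2 else 0) := by
        rw [hswap (fun x y => if ρ y < ρ x then (f x - f y)^2 else 0)]
        apply Finset.sum_congr rfl
        intro x _
        apply Finset.sum_congr rfl
        intro y _
        by_cases h : ρ x < ρ y
        · rw [if_pos h, if_pos h]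
          ring
        · rw [if_neg h, if_neg h]
      have step3 : (∑ x, ∑ y ∈ G.neighborFinset x, if ρ x < ρ y then (f x - f y)^2 else 0) = U := by
        rw [hUdef]
        apply Finset.sum_congr rfl
        intro x _
        rw [Finset.sum_filter]
      rw [step1, step2, step3]
      ring
    have := hexp
    rw [hfy, hdS, hsym, ← hT] at this
    linarith
  -- bound U
  set qq : ℕ → ℝ := fun i => if i+1 ≤ k then q^(i+1) else 0 with hqqdef
  have hUb : U ≤ ∑ i ∈ range (k+1), ((V i).card : ℝ) * (((d:ℝ)-1) * (q^i - qq i)^2) := by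
    rw [← help (fun i => ((d:ℝ)-1) * (q^i - qq i)^2), hUdef]
    apply Finset.sum_le_sum
    intro x _
    by_cases hx : ρ x ≤ (k:ℕ∞)
    · rw [if_pos hx]
      have hne : ρ x ≠ ⊤ := ne_top_of_le_ne_top (ENat.coe_ne_top k) hx
      have hxm : ρ x = (((ρ x).toNat : ℕ) : ℕ∞) := (ENat.coe_toNat hne).symm
      set m := (ρ x).toNat with hmdef
      have hval : ∀ y ∈ (G.neighborFinset x).filter (fun y => ρ x < ρ y),
          (f x - f y)^2 = (q^m - qq m)^2 := by
        intro y hy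
        obtain ⟨hyN, hylt⟩ := Finset.mem_filter.mp hy
        have hadjxy : G.Adj x y := (SimpleGraph.mem_neighborFinset G x y).mp hyN
        have hyub : ρ y ≤ ((m+1 : ℕ) : ℕ∞) := by
          have := rho_step G hadjxy (u₁ := u₁) (u₂ := u₂)
          rw [← hρdef] at this
          rw [hxm] at this
          calc ρ y ≤ ((m:ℕ):ℕ∞) + 1 := this
          _ = ((m+1 : ℕ) : ℕ∞) := by exact_mod_cast rfl
        have hylb : ((m:ℕ):ℕ∞) + 1 ≤ ρ y := by
          rw [hxm] at hylt
          exact (ENat.add_one_le_iff (ENat.coe_ne_top m)).mpr hylt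
        have hyeq : ρ y = ((m+1 : ℕ) : ℕ∞) := le_antisymm hyub (by
          calc ((m+1 : ℕ) : ℕ∞) = ((m:ℕ):ℕ∞) + 1 := by exact_mod_cast rfl
          _ ≤ ρ y := hylb)
        have hfx : f x = q^m := by
          rw [hfdef]
          dsimp only
          rw [if_pos hx, ← hmdef]
        have hfy : f y = qq m := by
          rw [hfdef, hqqdef]
          dsimp only
          rw [hyeq]
          by_cases hmk : m+1 ≤ k
          · rw [if_pos (by exact_mod_cast hmk), if_pos hmk, ENat.toNat_coe]
          · rw [if_neg (by
              intro hcon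
              exact hmk (by exact_mod_cast hcon)), if_neg hmk]
        rw [hfx, hfy]
      rw [Finset.sum_congr rfl hval, Finset.sum_const, nsmul_eq_mul]
      have hcard : (((G.neighborFinset x).filter (fun y => ρ x < ρ y)).card : ℝ) ≤ (d:ℝ) - 1 := by
        have h1 := count_up G hreg hadj hne
        have h2 : ((G.neighborFinset x).filter (fun y => ρ x < ρ y)).card + 1 ≤ d := h1
        have h3 : ((((G.neighborFinset x).filter (fun y => ρ x < ρ y)).card : ℝ)) + 1 ≤ (d:ℝ) := by
          exact_mod_cast h2
        linarith
      exact mul_le_mul_of_nonneg_right hcard (sq_nonneg _)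
    · rw [if_neg hx]
      apply le_of_eq
      apply Finset.sum_eq_zero
      intro y hy
      obtain ⟨_, hylt⟩ := Finset.mem_filter.mp hy
      have hfx : f x = 0 := by
        rw [hfdef]; dsimp only; rw [if_neg hx]
      have hfy : f y = 0 := by
        rw [hfdef]; dsimp only
        rw [if_neg]
        intro hcon
        exact hx (le_of_lt (lt_of_lt_of_le hylt hcon))
      rw [hfx, hfy]
      ring
  -- arithmetic identity
  have harith : (∑ i ∈ range (k+1), ((V i).card : ℝ) * (((d:ℝ)-1) * (q^i - qq i)^2))
      = ((d:ℝ) - 2*s) * S + (2*s - 1) * aa k := by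
    have hterm : ∀ i ∈ range k, ((V i).card : ℝ) * (((d:ℝ)-1) * (q^i - qq i)^2)
        = ((d:ℝ) - 2*s) * aa i := by
      intro i hi
      have hik : i + 1 ≤ k := mem_range.mp hi
      have hqqi : qq i = q^(i+1) := by rw [hqqdef]; exact if_pos hik
      have hsq2 : (q^i - q^(i+1))^2 = b^i * (1-q)^2 := by
        rw [← hqq2 i]
        ring
      have hc : ((d:ℝ)-1) * (1-q)^2 = (d:ℝ) - 2*s := by
        have h1 : s*(1-q) = s - 1 := by
          rw [mul_sub, mul_one, hsq]
        have h2 : ((d:ℝ)-1) * (1-q)^2 = (s*(1-q))^2 := by rw [← hs2]; ring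
        have h3 : (s-1)^2 = s^2 - 2*s + 1 := by ring
        rw [h2, h1, h3, hs2]
        ring
      rw [hqqi, haadef]
      dsimp only
      rw [hsq2]
      calc ((V i).card : ℝ) * (((d:ℝ)-1) * (b^i * (1-q)^2))
          = (((d:ℝ)-1) * (1-q)^2) * (((V i).card : ℝ) * b^i) := by ring
      _ = ((d:ℝ) - 2*s) * (((V i).card : ℝ) * b^i) := by rw [hc]
    have hlast : ((V k).card : ℝ) * (((d:ℝ)-1) * (q^k - qq k)^2)
        = ((d:ℝ) - 2*s) * aa k + (2*s - 1) * aa k := by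
      have hqqk : qq k = 0 := by
        rw [hqqdef]
        exact if_neg (by omega)
      rw [hqqk, haadef]
      dsimp only
      rw [sub_zero, ← hqq2 k]
      ring
    rw [Finset.sum_range_succ, Finset.sum_congr rfl hterm, hlast, hSa,
      Finset.sum_range_succ, mul_add, Finset.mul_sum]
    ring
  -- monotonicity
  have hmono : ∀ i, aa (i+1) ≤ aa i := by
    intro i
    have hgrow := sphere_growth G hreg hadj i
    have hgrowR : ((V (i+1)).card : ℝ) ≤ ((d:ℝ)-1) * ((V i).card : ℝ) := by
      have h1 : ((V (i+1)).card : ℝ) ≤ ((d-1 : ℕ) : ℝ) * ((V i).card : ℝ) := by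
        exact_mod_cast hgrow
      have h2 : ((d-1 : ℕ) : ℝ) ≤ (d:ℝ) - 1 := by
        have : (1:ℕ) ≤ d := by omega
        push_cast [Nat.cast_sub this]
        linarith
      exact le_trans h1 (mul_le_mul_of_nonneg_right h2 (Nat.cast_nonneg _))
    rw [haadef]
    dsimp only
    calc ((V (i+1)).card : ℝ) * b^(i+1) ≤ (((d:ℝ)-1) * ((V i).card : ℝ)) * b^(i+1) := by
          apply mul_le_mul_of_nonneg_right hgrowR (pow_nonneg (le_of_lt hb0) _)
    _ = ((V i).card : ℝ) * b^i * (((d:ℝ)-1) * b) := by ring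
    _ = ((V i).card : ℝ) * b^i := by rw [hb, mul_one]
  have hanti : ∀ i j, i ≤ j → aa j ≤ aa i := by
    intro i j hij
    induction hij with
    | refl => exact le_rfl
    | step _ ih => exact le_trans (hmono _) ih
  have haknn : 0 ≤ aa k := by
    rw [haadef]
    exact mul_nonneg (Nat.cast_nonneg _) (pow_nonneg (le_of_lt hb0) _)
  have hSk : (k+1 : ℝ) * aa k ≤ S := by
    rw [hSa]
    calc (k+1 : ℝ) * aa k = ∑ _i ∈ range (k+1), aa k := by
          rw [Finset.sum_const, card_range, nsmul_eq_mul]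
          push_cast
          ring
    _ ≤ ∑ i ∈ range (k+1), aa i := by
          apply Finset.sum_le_sum
          intro i hi
          exact hanti i k (Nat.lt_succ_iff.mp (mem_range.mp hi))
  have hSnn : 0 ≤ S := by
    rw [hSa]
    apply Finset.sum_nonneg
    intro i _
    rw [haadef]
    exact mul_nonneg (Nat.cast_nonneg _) (pow_nonneg (le_of_lt hb0) _)
  -- final chain
  have h2sd : 2*s - 1 ≤ (d:ℝ) := by
    have h3 : (s-1)^2 = s^2 - 2*s + 1 := by ring
    have h4 := sq_nonneg (s-1)
    linarith [hs2]
  have hkpos : (0:ℝ) < (k:ℝ)+1 := by positivity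
  have hakS : aa k ≤ S / ((k:ℝ)+1) := by
    rw [le_div_iff₀ hkpos]
    calc aa k * ((k:ℝ)+1) = ((k:ℝ)+1) * aa k := by ring
    _ ≤ S := by exact_mod_cast hSk
  have hfinal : (2*s - (d:ℝ)/((k:ℝ)+1)) * S ≤ T := by
    have h1 : T ≥ 2*s*S - (2*s - 1) * aa k := by
      have hUb2 : U ≤ ((d:ℝ) - 2*s) * S + (2*s - 1) * aa k := harith ▸ hUb
      linarith [hDir, hUb2]
    have h2 : (2*s - 1) * aa k ≤ (d:ℝ) * (S / ((k:ℝ)+1)) := by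
      have hd0 : (0:ℝ) ≤ (d:ℝ) := Nat.cast_nonneg d
      calc (2*s - 1) * aa k ≤ (d:ℝ) * aa k := mul_le_mul_of_nonneg_right h2sd haknn
      _ ≤ (d:ℝ) * (S / ((k:ℝ)+1)) := by
            apply mul_le_mul_of_nonneg_left hakS hd0
    have h3 : (d:ℝ) * (S / ((k:ℝ)+1)) = ((d:ℝ)/((k:ℝ)+1)) * S := by
      field_simp
    have hgoal : (2*s - (d:ℝ)/((k:ℝ)+1)) * S = 2*s*S - ((d:ℝ)/((k:ℝ)+1))*S := by ring
    linarith [h1, h2, h3, hgoal]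
  calc (2*Real.sqrt ((d:ℝ)-1) - (d:ℝ)/((k:ℝ)+1)) * (f ⬝ᵥ f)
      = (2*s - (d:ℝ)/((k:ℝ)+1)) * S := by rw [hsdef, hSdef]
  _ ≤ T := hfinal


lemma edist_le_of_rho_le (hadj : G.Adj u₁ u₂) {k : ℕ} {x : Fin n}
    (h : rho G u₁ u₂ x ≤ (k:ℕ∞)) : G.edist u₁ x ≤ ((k+1:ℕ) : ℕ∞) := by
  rcases min_le_iff.mp h with h1 | h1
  · calc G.edist u₁ x ≤ (k:ℕ∞) := h1
    _ ≤ ((k+1:ℕ) : ℕ∞) := by exact_mod_cast Nat.le_succ k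
  · calc G.edist u₁ x ≤ G.edist u₁ u₂ + G.edist u₂ x := SimpleGraph.edist_triangle
    _ ≤ 1 + (k:ℕ∞) := by
        apply add_le_add _ h1
        rw [SimpleGraph.edist_eq_one_iff_adj.mpr hadj]
    _ = ((k+1:ℕ) : ℕ∞) := by
        push_cast
        rw [add_comm]


end AB

open AB in
/-- **Alon–Boppana**: for every `d ≥ 3` and `ε > 0` there is `N` such that every
`d`-regular simple graph on `n ≥ N` vertices has second largest adjacency eigenvalue
at least `2√(d-1) - ε`. -/
theorem alon_boppana (d : ℕ) (hd : 3 ≤ d) (ε : ℝ) (hε : 0 < ε) :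
    ∃ N : ℕ, ∀ n : ℕ, N ≤ n → ∀ (G : SimpleGraph (Fin n)) (_ : DecidableRel G.Adj),
      G.IsRegularOfDegree d →
        2 * Real.sqrt (d - 1) - ε ≤ nthLargestEigenvalue (G.adjMatrix ℝ) 2 := by
  classical
  set k : ℕ := ⌈(d:ℝ)/ε⌉₊ with hkdef
  refine ⟨(d+1)^(2*k+4) + 1, ?_⟩
  intro n hn G hdec hreg
  have hn1 : 1 ≤ n := le_trans (Nat.succ_le_succ (Nat.zero_le _)) hn
  -- basic real constants
  have hd1 : (2:ℝ) ≤ (d:ℝ) - 1 := by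
    have h3 : (3:ℝ) ≤ (d:ℝ) := by exact_mod_cast hd
    linarith
  set s : ℝ := Real.sqrt ((d:ℝ)-1) with hsdef
  have hs2 : s^2 = (d:ℝ)-1 := Real.sq_sqrt (by linarith)
  have hs1 : 1 ≤ s := by nlinarith [Real.sqrt_nonneg ((d:ℝ)-1)]
  set c : ℝ := 2*s - (d:ℝ)/((k:ℝ)+1) with hcdef
  have hkpos : (0:ℝ) < (k:ℝ)+1 := by positivity
  have hcd : c ≤ (d:ℝ) := by
    have hexp : (s-1)^2 = s^2 - 2*s + 1 := by ring
    have h1 : 2*s ≤ (d:ℝ) := by linarith [sq_nonneg (s-1), hexp, hs2]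
    have h2 : 0 ≤ (d:ℝ)/((k:ℝ)+1) := by positivity
    rw [hcdef]; linarith
  -- choose first edge
  have hne : Nonempty (Fin n) := ⟨⟨0, by omega⟩⟩
  obtain ⟨u₁⟩ := hne
  have hNu₁ : (G.neighborFinset u₁).Nonempty := by
    rw [← Finset.card_pos]
    have hcard : (G.neighborFinset u₁).card = d := hreg u₁
    omega
  obtain ⟨u₂, hu₂⟩ := hNu₁
  have hadj1 : G.Adj u₁ u₂ := (SimpleGraph.mem_neighborFinset G u₁ u₂).mp hu₂
  -- far vertex
  have hfar : ∃ v₁ : Fin n, ¬ (G.edist u₁ v₁ ≤ ((2*k+3:ℕ) : ℕ∞)) := by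
    by_contra hcon
    push_neg at hcon
    have hfull : (Finset.univ : Finset (Fin n)).filter
        (fun x => G.edist u₁ x ≤ ((2*k+3:ℕ) : ℕ∞)) = Finset.univ := by
      apply Finset.filter_true_of_mem
      intro x _
      exact hcon x
    have h1 := ball_bound G hreg u₁ (2*k+3)
    rw [hfull, Finset.card_univ, Fintype.card_fin] at h1
    have h2 : (d+1)^(2*k+3) ≤ (d+1)^(2*k+4) := Nat.pow_le_pow_right (by omega) (by omega)
    omega
  obtain ⟨v₁, hv₁⟩ := hfar
  have hNv₁ : (G.neighborFinset v₁).Nonempty := by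
    rw [← Finset.card_pos]
    have hcard : (G.neighborFinset v₁).card = d := hreg v₁
    omega
  obtain ⟨v₂, hv₂⟩ := hNv₁
  have hadj2 : G.Adj v₁ v₂ := (SimpleGraph.mem_neighborFinset G v₁ v₂).mp hv₂
  -- separation
  have hsep : ∀ x y : Fin n, rho G u₁ u₂ x ≤ (k:ℕ∞) → rho G v₁ v₂ y ≤ (k:ℕ∞) →
      (x = y ∨ G.Adj x y) → False := by
    intro x y hx hy hxy
    have h1 : G.edist u₁ x ≤ ((k+1:ℕ) : ℕ∞) := edist_le_of_rho_le G hadj1 hx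
    have h2 : G.edist v₁ y ≤ ((k+1:ℕ) : ℕ∞) := edist_le_of_rho_le G hadj2 hy
    have h3 : G.edist x y ≤ (1 : ℕ∞) := by
      rcases hxy with rfl | hxy
      · rw [SimpleGraph.edist_self]; exact zero_le
      · rw [SimpleGraph.edist_eq_one_iff_adj.mpr hxy]
    have h4 : G.edist u₁ v₁ ≤ ((2*k+3:ℕ) : ℕ∞) := by
      calc G.edist u₁ v₁ ≤ G.edist u₁ x + G.edist x v₁ := SimpleGraph.edist_triangle
      _ ≤ G.edist u₁ x + (G.edist x y + G.edist y v₁) :=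
          add_le_add_right SimpleGraph.edist_triangle _
      _ ≤ ((k+1:ℕ) : ℕ∞) + ((1:ℕ∞) + ((k+1:ℕ) : ℕ∞)) := by
          apply add_le_add h1
          apply add_le_add h3
          rw [SimpleGraph.edist_comm]
          exact h2
      _ = ((2*k+3:ℕ) : ℕ∞) := by
          push_cast
          ring
    exact hv₁ h4
  -- Nilli test functions
  obtain ⟨f, hf0, hfu, hfsupp, hfray⟩ := nilli G hd hreg hadj1 k
  obtain ⟨g, hg0, hgv, hgsupp, hgray⟩ := nilli G hd hreg hadj2 k
  set A := G.adjMatrix ℝ with hAdef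
  have hA : A.IsHermitian := by
    rw [Matrix.IsHermitian, conjTranspose_eq_transpose_of_trivial]
    exact G.isSymm_adjMatrix
  set α : ℝ := ∑ x, f x with hαdef
  set β : ℝ := ∑ x, g x with hβdef
  have hα1 : 1 ≤ α := by
    rw [hαdef, ← hfu]
    exact Finset.single_le_sum (fun x _ => hf0 x) (Finset.mem_univ u₁)
  have hβ1 : 1 ≤ β := by
    rw [hβdef, ← hgv]
    exact Finset.single_le_sum (fun x _ => hg0 x) (Finset.mem_univ v₁)
  set h : Fin n → ℝ := β • f - α • g with hhdef
  -- disjoint supports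
  have hdisj : ∀ x, f x * g x = 0 := by
    intro x
    by_cases hfx : f x = 0
    · rw [hfx, zero_mul]
    · by_cases hgx : g x = 0
      · rw [hgx, mul_zero]
      · exact absurd (Or.inl rfl) (fun hor => hsep x x (hfsupp x hfx) (hgsupp x hgx) hor)
  have hcross : ∀ (φ ψ : Fin n → ℝ), (∀ x, φ x ≠ 0 → rho G u₁ u₂ x ≤ (k:ℕ∞)) →
      (∀ x, ψ x ≠ 0 → rho G v₁ v₂ x ≤ (k:ℕ∞)) → φ ⬝ᵥ (A *ᵥ ψ) = 0 := by
    intro φ ψ hφ hψ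
    rw [dotProduct]
    apply Finset.sum_eq_zero
    intro x _
    by_cases hφx : φ x = 0
    · rw [hφx, zero_mul]
    · rw [hAdef, SimpleGraph.adjMatrix_mulVec_apply]
      have : ∑ y ∈ G.neighborFinset x, ψ y = 0 := by
        apply Finset.sum_eq_zero
        intro y hy
        by_contra hψy
        exact hsep x y (hφ x hφx) (hψ y hψy)
          (Or.inr ((SimpleGraph.mem_neighborFinset G x y).mp hy))
      rw [this, mul_zero]
  have hgf_cross : g ⬝ᵥ (A *ᵥ f) = 0 := by
    rw [dotProduct]
    apply Finset.sum_eq_zero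
    intro x _
    by_cases hgx : g x = 0
    · rw [hgx, zero_mul]
    · rw [hAdef, SimpleGraph.adjMatrix_mulVec_apply]
      have : ∑ y ∈ G.neighborFinset x, f y = 0 := by
        apply Finset.sum_eq_zero
        intro y hy
        by_contra hfy
        exact hsep y x (hfsupp y hfy) (hgsupp x hgx)
          (Or.inr (((SimpleGraph.mem_neighborFinset G x y).mp hy).symm))
      rw [this, mul_zero]
  have hfg_cross : f ⬝ᵥ (A *ᵥ g) = 0 := hcross f g hfsupp hgsupp
  -- h ≠ 0
  have hgu₁ : g u₁ = 0 := by
    by_contra hgx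
    exact hsep u₁ u₁ (hfsupp u₁ (by rw [hfu]; norm_num)) (hgsupp u₁ hgx) (Or.inl rfl)
  have hh0 : h ≠ 0 := by
    intro hcon
    have : h u₁ = 0 := by rw [hcon]; rfl
    rw [hhdef] at this
    simp only [Pi.sub_apply, Pi.smul_apply, smul_eq_mul] at this
    rw [hfu, hgu₁] at this
    nlinarith
  -- orthogonality to constant vector
  set v : Fin n → ℝ := Function.const (Fin n) (1:ℝ) with hvdef
  have hv0 : v ≠ 0 := by
    intro hcon
    have : v ⟨0, by omega⟩ = 0 := by rw [hcon]; rfl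
    rw [hvdef] at this
    simp at this
  have hAv : A *ᵥ v = (d:ℝ) • v := by
    funext x
    rw [hvdef]
    have := SimpleGraph.adjMatrix_mulVec_const_apply_of_regular (α := ℝ) (a := (1:ℝ)) hreg (v := x)
    rw [hAdef]
    simp only [Pi.smul_apply, smul_eq_mul]
    rw [this]
    simp
  have hor : h ⬝ᵥ v = 0 := by
    rw [hhdef, sub_dotProduct, smul_dotProduct, smul_dotProduct]
    have h1 : f ⬝ᵥ v = α := by
      rw [hvdef, hαdef, dotProduct]
      apply Finset.sum_congr rfl
      intro x _
      simp [Function.const]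
    have h2 : g ⬝ᵥ v = β := by
      rw [hvdef, hβdef, dotProduct]
      apply Finset.sum_congr rfl
      intro x _
      simp [Function.const]
    rw [h1, h2]
    simp only [smul_eq_mul]
    ring
  -- Rayleigh quotient
  set Sf : ℝ := f ⬝ᵥ f with hSfdef
  set Sg : ℝ := g ⬝ᵥ g with hSgdef
  set Tf : ℝ := f ⬝ᵥ (A *ᵥ f) with hTfdef
  set Tg : ℝ := g ⬝ᵥ (A *ᵥ g) with hTgdef
  have hfg0 : f ⬝ᵥ g = 0 := by
    rw [dotProduct]
    exact Finset.sum_eq_zero (fun x _ => hdisj x)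
  have hgf0 : g ⬝ᵥ f = 0 := by
    rw [dotProduct_comm]
    exact hfg0
  have e1 : h ⬝ᵥ h = β^2 * Sf + α^2 * Sg := by
    rw [hhdef, sub_dotProduct, smul_dotProduct, smul_dotProduct,
      dotProduct_sub, dotProduct_sub, dotProduct_smul, dotProduct_smul,
      dotProduct_smul, dotProduct_smul, hfg0, hgf0, hSfdef, hSgdef]
    simp only [smul_eq_mul]
    ring
  have e2 : h ⬝ᵥ (A *ᵥ h) = β^2 * Tf + α^2 * Tg := by
    rw [hhdef, Matrix.mulVec_sub, Matrix.mulVec_smul, Matrix.mulVec_smul,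
      sub_dotProduct, smul_dotProduct, smul_dotProduct,
      dotProduct_sub, dotProduct_sub, dotProduct_smul, dotProduct_smul,
      dotProduct_smul, dotProduct_smul, hfg_cross, hgf_cross, hTfdef, hTgdef]
    simp only [smul_eq_mul]
    ring
  have hray : c * (h ⬝ᵥ h) ≤ h ⬝ᵥ (A *ᵥ h) := by
    rw [e1, e2]
    have b1 : β^2*(c*Sf) ≤ β^2*Tf := mul_le_mul_of_nonneg_left hfray (sq_nonneg β)
    have b2 : α^2*(c*Sg) ≤ α^2*Tg := mul_le_mul_of_nonneg_left hgray (sq_nonneg α)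
    calc c * (β^2 * Sf + α^2 * Sg) = β^2*(c*Sf) + α^2*(c*Sg) := by ring
    _ ≤ β^2*Tf + α^2*Tg := add_le_add b1 b2
  have hfin := core hA hcd hv0 hAv hh0 hor hray
  -- conclude
  have hεk : (d:ℝ)/((k:ℝ)+1) ≤ ε := by
    rw [div_le_iff₀ hkpos]
    have h1 : (d:ℝ)/ε ≤ (k:ℝ) := Nat.le_ceil _
    have h2 : (d:ℝ) ≤ ε * (k:ℝ) := by
      rw [div_le_iff₀ hε] at h1
      linarith
    have h3 : ε * (k:ℝ) ≤ ε * ((k:ℝ)+1) := by nlinarith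
    linarith
  calc 2 * Real.sqrt ((d:ℝ) - 1) - ε ≤ c := by rw [hcdef, hsdef]; linarith
  _ ≤ nthLargestEigenvalue (G.adjMatrix ℝ) 2 := hfin
end

section
/- Suppose p_0(z) and p_1(z) are monic polynomials of degree n with real coefficients such that for every t ∈ [0,1] the convex combination p_t := (1−t)p_0 + t p_1 is real-rooted. Then for every index 1 ≤ i ≤ n and every t ∈ [0,1], min{λ_i(p_0), λ_i(p_1)} ≤ λ_i(p_t) ≤ max{λ_i(p_0), λ_i(p_1)}. -/
open Polynomial Filter

theorem realRooted_splits_aux : ∀ (N : ℕ) (p : Polynomial ℝ), p.natDegree ≤ N → p ≠ 0 →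
    RealRooted p → p.Splits := by
  intro N
  induction N with
  | zero => exact fun p h _ _ => Splits.of_natDegree_le_one (h.trans zero_le_one)
  | succ N ih =>
    intro p hdeg hne hrr
    by_cases h1 : p.natDegree ≤ 1
    · exact Splits.of_natDegree_le_one h1
    push_neg at h1
    have hmapne : p.map (algebraMap ℝ ℂ) ≠ 0 :=
      (Polynomial.map_ne_zero_iff (algebraMap ℝ ℂ).injective).mpr hne
    have hdegmap : 0 < (p.map (algebraMap ℝ ℂ)).degree := by
      rw [degree_map]
      have : 0 < p.natDegree := by omega
      exact natDegree_pos_iff_degree_pos.mp this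
    obtain ⟨z, hz⟩ := Complex.exists_root hdegmap
    have him := hrr z hz
    have hz' : ((z.re : ℝ) : ℂ) = z := by
      apply Complex.ext <;> simp [him]
    have hroot : p.IsRoot z.re := by
      have : (algebraMap ℝ ℂ) (p.eval z.re) = 0 := by
        have : eval ((algebraMap ℝ ℂ) z.re) (p.map (algebraMap ℝ ℂ)) = 0 := by
          show ((p.map (algebraMap ℝ ℂ))).eval ((z.re : ℝ) : ℂ) = 0
          rw [hz']; exact hz
        rwa [eval_map, eval₂_at_apply] at this
      exact (_root_.map_eq_zero (algebraMap ℝ ℂ)).mp this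
    obtain ⟨q, hq⟩ := dvd_iff_isRoot.mpr hroot
    have hXC : (X - C z.re) ≠ (0 : Polynomial ℝ) := X_sub_C_ne_zero z.re
    have hqne : q ≠ 0 := by rintro rfl; simp [hq] at hne
    have hqdeg : q.natDegree ≤ N := by
      have := natDegree_mul hXC hqne
      rw [← hq, natDegree_X_sub_C] at this
      omega
    have hqrr : RealRooted q := by
      intro w hw
      apply hrr w
      rw [hq, Polynomial.map_mul]
      simp only [IsRoot, eval_mul]
      simp [hw.eq_zero]
    rw [hq]
    exact (Splits.X_sub_C _).mul (ih q hqdeg hqne hqrr)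

theorem monic_root_abs_le {p : Polynomial ℝ} (hm : p.Monic) {r : ℝ} (hr : p.IsRoot r) :
    |r| ≤ 1 + ∑ j ∈ Finset.range p.natDegree, |p.coeff j| := by
  by_contra hcon
  push_neg at hcon
  set n := p.natDegree with hn
  set S := ∑ j ∈ Finset.range n, |p.coeff j| with hS
  have hS0 : 0 ≤ S := Finset.sum_nonneg fun j _ => abs_nonneg _
  have hr1 : 1 ≤ |r| := by linarith
  have hn0 : n ≠ 0 := by
    rintro h
    have : p = 1 := hm.natDegree_eq_zero.mp h
    rw [this] at hr
    simp [IsRoot] at hr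
  have heval : p.eval r = ∑ i ∈ Finset.range (n + 1), p.coeff i * r ^ i := by
    rw [eval_eq_sum_range]
  have hsplit : (0:ℝ) = (∑ i ∈ Finset.range n, p.coeff i * r ^ i) + r ^ n := by
    have := hr.eq_zero
    rw [heval, Finset.sum_range_succ] at this
    rw [← this]
    simp [hn, hm.coeff_natDegree]
  have hb : |r| ^ n ≤ S * |r| ^ (n - 1) := by
    have h1 : |r| ^ n = |∑ i ∈ Finset.range n, p.coeff i * r ^ i| := by
      have : (∑ i ∈ Finset.range n, p.coeff i * r ^ i) = - r ^ n := by linarith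
      rw [this, abs_neg, abs_pow]
    rw [h1]
    calc |∑ i ∈ Finset.range n, p.coeff i * r ^ i|
        ≤ ∑ i ∈ Finset.range n, |p.coeff i * r ^ i| := Finset.abs_sum_le_sum_abs _ _
      _ ≤ ∑ i ∈ Finset.range n, |p.coeff i| * |r| ^ (n - 1) := by
          apply Finset.sum_le_sum
          intro i hi
          rw [abs_mul, abs_pow]
          apply mul_le_mul_of_nonneg_left _ (abs_nonneg _)
          apply pow_le_pow_right₀ hr1
          have := Finset.mem_range.mp hi
          omega
      _ = S * |r| ^ (n - 1) := by rw [← Finset.sum_mul]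
  have hgt : S * |r| ^ (n - 1) < |r| ^ n := by
    have hpow : (0:ℝ) < |r| ^ (n - 1) := pow_pos (by linarith) _
    have : |r| ^ n = |r| * |r| ^ (n - 1) := by
      rw [← pow_succ']
      congr 1
      omega
    rw [this]
    have : S < |r| := by linarith
    exact mul_lt_mul_of_pos_right this hpow
  linarith

section Aux


/-- descending list of roots -/
noncomputable def descRoots (p : Polynomial ℝ) : List ℝ :=
  (p.roots.sort (· ≤ ·)).reverse

theorem descRoots_coe (p : Polynomial ℝ) : (descRoots p : Multiset ℝ) = p.roots := by
  rw [descRoots, Multiset.coe_reverse, Multiset.sort_eq]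

theorem descRoots_sorted (p : Polynomial ℝ) : (descRoots p).Pairwise (· ≥ ·) := by
  have h := Multiset.pairwise_sort p.roots (· ≤ ·)
  rw [descRoots]
  rw [List.pairwise_reverse]
  exact h

theorem sorted_getD_le (l : List ℝ) (hs : l.Pairwise (· ≥ ·)) (a b : ℕ) (hab : a ≤ b)
    (hb : b < l.length) : l.getD b 0 ≤ l.getD a 0 := by
  rw [List.getD_eq_getElem _ _ hb, List.getD_eq_getElem _ _ (lt_of_le_of_lt hab hb)]
  have := hs.rel_get_of_le (a := ⟨a, lt_of_le_of_lt hab hb⟩) (b := ⟨b, hb⟩) hab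
  simpa using this

theorem list_eq_ofFn_getD {n : ℕ} (l : List ℝ) (hlen : l.length = n) :
    l = List.ofFn (fun j : Fin n => l.getD (j : ℕ) 0) := by
  subst hlen
  have : (fun j : Fin l.length => l.getD (j : ℕ) 0) = fun j : Fin l.length => l[(j : ℕ)] := by
    funext j
    exact List.getD_eq_getElem _ _ j.isLt
  rw [this, List.ofFn_getElem]

theorem prod_X_sub_C_ofFn {n : ℕ} (v : Fin n → ℝ) :
    ((List.ofFn v).map (fun a => X - C a)).prod = ∏ j : Fin n, (X - C (v j)) := by
  rw [List.map_ofFn, List.prod_ofFn]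
  rfl

theorem roots_prod_X_sub_C_fin {n : ℕ} (v : Fin n → ℝ) :
    (∏ j : Fin n, (X - C (v j))).roots = (List.ofFn v : Multiset ℝ) := by
  rw [← prod_X_sub_C_ofFn, ← Multiset.prod_coe, ← Multiset.map_coe,
    roots_multiset_prod_X_sub_C]

theorem eval_prod_X_sub_C_fin {n : ℕ} (v : Fin n → ℝ) (y : ℝ) :
    (∏ j : Fin n, (X - C (v j))).eval y = ∏ j : Fin n, (y - v j) := by
  rw [eval_prod]
  simp

end Aux

/-- If `p₀, p₁` are monic real polynomials of degree `n` all of whose convex combinations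
`p_t = (1-t) p₀ + t p₁`, `t ∈ [0,1]`, are real-rooted, then for every `1 ≤ i ≤ n` and
`t ∈ [0,1]`, the `i`-th largest root of `p_t` lies between `min {λ_i(p₀), λ_i(p₁)}` and
`max {λ_i(p₀), λ_i(p₁)}`. -/
theorem roots_of_convex_combination (n : ℕ) (p₀ p₁ : Polynomial ℝ)
    (h₀m : p₀.Monic) (h₁m : p₁.Monic) (h₀d : p₀.natDegree = n) (h₁d : p₁.natDegree = n)
    (hrr : ∀ t ∈ Set.Icc (0 : ℝ) 1, RealRooted (C (1 - t) * p₀ + C t * p₁)) :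
    ∀ i : ℕ, 1 ≤ i → i ≤ n → ∀ t ∈ Set.Icc (0 : ℝ) 1,
      min (nthLargestRoot p₀ i) (nthLargestRoot p₁ i) ≤
          nthLargestRoot (C (1 - t) * p₀ + C t * p₁) i ∧
        nthLargestRoot (C (1 - t) * p₀ + C t * p₁) i ≤
          max (nthLargestRoot p₀ i) (nthLargestRoot p₁ i) := by
  intro i hi1 hin t ht
  have hn1 : 1 ≤ n := le_trans hi1 hin
  set I : Set ℝ := Set.Icc (0 : ℝ) 1 with hI
  set Q : ℝ → Polynomial ℝ := fun s => C (1 - s) * p₀ + C s * p₁ with hQdef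
  have hQ0 : Q 0 = p₀ := by simp [hQdef]
  have hQ1 : Q 1 = p₁ := by simp [hQdef]
  -- basic degree facts
  have hcoeffQ : ∀ (s : ℝ) (k : ℕ), (Q s).coeff k = (1 - s) * p₀.coeff k + s * p₁.coeff k := by
    intro s k
    show (C (1 - s) * p₀ + C s * p₁).coeff k = _
    simp only [coeff_add, coeff_C_mul]
  have hcoeffn : ∀ s : ℝ, (Q s).coeff n = 1 := by
    intro s
    have e0 : p₀.coeff n = 1 := by rw [← h₀d]; exact h₀m.coeff_natDegree
    have e1 : p₁.coeff n = 1 := by rw [← h₁d]; exact h₁m.coeff_natDegree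
    rw [hcoeffQ, e0, e1]; ring
  have hdegle : ∀ s : ℝ, (Q s).natDegree ≤ n := by
    intro s
    apply le_trans (natDegree_add_le _ _)
    simp only [max_le_iff]
    exact ⟨le_trans (natDegree_C_mul_le _ _) h₀d.le, le_trans (natDegree_C_mul_le _ _) h₁d.le⟩
  have hdeg : ∀ s : ℝ, (Q s).natDegree = n := by
    intro s
    rcases lt_or_eq_of_le (hdegle s) with h | h
    · exact absurd (coeff_eq_zero_of_natDegree_lt h) (by rw [hcoeffn s]; exact one_ne_zero)
    · exact h
  have hmon : ∀ s : ℝ, (Q s).Monic := by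
    intro s
    have : (Q s).leadingCoeff = 1 := by rw [leadingCoeff, hdeg s, hcoeffn s]
    exact this
  have hQne : ∀ s : ℝ, Q s ≠ 0 := fun s => (hmon s).ne_zero
  have hrr' : ∀ s ∈ I, RealRooted (Q s) := fun s hs => hrr s hs
  have hsplits : ∀ s ∈ I, (Q s).Splits := fun s hs =>
    realRooted_splits_aux n (Q s) (hdegle s) (hQne s) (hrr' s hs)
  have hcard : ∀ s ∈ I, ((Q s).roots).card = n := by
    intro s hs
    rw [splits_iff_card_roots.mp (hsplits s hs), hdeg s]
  have hlen : ∀ s ∈ I, (descRoots (Q s)).length = n := by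
    intro s hs
    have := hcard s hs
    rw [← descRoots_coe (Q s)] at this
    simpa using this
  -- the sorted root vector
  set w : ℝ → Fin n → ℝ := fun s j => (descRoots (Q s)).getD (j : ℕ) 0 with hwdef
  have hlist : ∀ s ∈ I, descRoots (Q s) = List.ofFn (w s) := fun s hs =>
    list_eq_ofFn_getD _ (hlen s hs)
  have hwanti : ∀ s ∈ I, ∀ a b : Fin n, a ≤ b → w s b ≤ w s a := by
    intro s hs a b hab
    exact sorted_getD_le _ (descRoots_sorted (Q s)) a b hab (by rw [hlen s hs]; exact b.isLt)
  have hwroot : ∀ s ∈ I, ∀ j : Fin n, w s j ∈ (Q s).roots := by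
    intro s hs j
    rw [← descRoots_coe (Q s)]
    have hj : (j : ℕ) < (descRoots (Q s)).length := by rw [hlen s hs]; exact j.isLt
    have : w s j = (descRoots (Q s))[(j : ℕ)] := List.getD_eq_getElem _ _ hj
    rw [this]
    exact_mod_cast List.getElem_mem hj
  have hprod : ∀ s ∈ I, Q s = ∏ j : Fin n, (X - C (w s j)) := by
    intro s hs
    have h1 := Splits.eq_prod_roots_of_monic (hsplits s hs) (hmon s)
    rw [← descRoots_coe (Q s), hlist s hs] at h1
    rw [h1, Multiset.map_coe, Multiset.prod_coe, List.map_ofFn, List.prod_ofFn]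
    rfl
  have heval : ∀ s ∈ I, ∀ y : ℝ, (Q s).eval y = ∏ j : Fin n, (y - w s j) := by
    intro s hs y
    rw [hprod s hs, eval_prod_X_sub_C_fin]
  have hevalt : ∀ y : ℝ, Continuous fun s : ℝ => (Q s).eval y := by
    intro y
    have : (fun s : ℝ => (Q s).eval y) = fun s : ℝ => (1 - s) * p₀.eval y + s * p₁.eval y := by
      funext s
      simp [hQdef]
    rw [this]
    fun_prop
  -- uniform root bound
  set B : ℝ := 1 + ∑ j ∈ Finset.range n, (|p₀.coeff j| + |p₁.coeff j|) with hBdef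
  have hwbound : ∀ s ∈ I, ∀ j : Fin n, w s j ∈ Set.Icc (-B) B := by
    intro s hs j
    have h1 : |w s j| ≤ 1 + ∑ k ∈ Finset.range (Q s).natDegree, |(Q s).coeff k| :=
      monic_root_abs_le (hmon s) (isRoot_of_mem_roots (hwroot s hs j))
    have h2 : ∑ k ∈ Finset.range (Q s).natDegree, |(Q s).coeff k|
        ≤ ∑ k ∈ Finset.range n, (|p₀.coeff k| + |p₁.coeff k|) := by
      rw [hdeg s]
      apply Finset.sum_le_sum
      intro k _
      rw [hcoeffQ]
      obtain ⟨hs0, hs1⟩ := hs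
      calc |(1 - s) * p₀.coeff k + s * p₁.coeff k|
          ≤ |(1 - s) * p₀.coeff k| + |s * p₁.coeff k| := abs_add_le _ _
        _ = |1 - s| * |p₀.coeff k| + |s| * |p₁.coeff k| := by rw [abs_mul, abs_mul]
        _ ≤ 1 * |p₀.coeff k| + 1 * |p₁.coeff k| := by
            apply add_le_add <;> apply mul_le_mul_of_nonneg_right _ (abs_nonneg _) <;>
              rw [abs_le] <;> constructor <;> linarith
        _ = |p₀.coeff k| + |p₁.coeff k| := by ring
    have h3 : |w s j| ≤ B := by rw [hBdef]; linarith
    rw [Set.mem_Icc]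
    constructor <;> [linarith [neg_abs_le (w s j)]; linarith [le_abs_self (w s j)]]
  -- continuity of the sorted root vector
  have hwcont : ∀ t₀ ∈ I, Tendsto w (nhdsWithin t₀ I) (nhds (w t₀)) := by
    intro t₀ ht₀
    rw [tendsto_iff_seq_tendsto]
    intro u hu
    have hu' : Tendsto u atTop (nhds t₀) := hu.mono_right nhdsWithin_le_nhds
    have humem : ∀ᶠ k in atTop, u k ∈ I := (tendsto_nhdsWithin_iff.mp hu).2
    apply tendsto_of_subseq_tendsto
    intro ns hns
    have h1 : Tendsto (fun k => u (ns k)) atTop (nhds t₀) := hu'.comp hns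
    have h2 : ∀ᶠ k in atTop, u (ns k) ∈ I := hns.eventually humem
    have hK : IsCompact (Set.Icc (fun _ : Fin n => -B) (fun _ : Fin n => B)) := isCompact_Icc
    have hfreq : ∃ᶠ k in atTop,
        (fun k => w (u (ns k))) k ∈ Set.Icc (fun _ : Fin n => -B) (fun _ : Fin n => B) := by
      apply Eventually.frequently
      filter_upwards [h2] with k hk
      rw [Set.mem_Icc]
      constructor <;> intro j
      · exact (hwbound _ hk j).1
      · exact (hwbound _ hk j).2
    obtain ⟨v, hvK, φ, hφ, hφtd⟩ := hK.tendsto_subseq' hfreq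
    refine ⟨φ, ?_⟩
    have hm : Tendsto (fun k => u (ns (φ k))) atTop (nhds t₀) := h1.comp hφ.tendsto_atTop
    have hmem2 : ∀ᶠ k in atTop, u (ns (φ k)) ∈ I := hφ.tendsto_atTop.eventually h2
    have hcoord : ∀ j : Fin n, Tendsto (fun k => w (u (ns (φ k))) j) atTop (nhds (v j)) :=
      fun j => ((continuous_apply j).tendsto v).comp hφtd
    have hvsort : ∀ a b : Fin n, a ≤ b → v b ≤ v a := by
      intro a b hab
      apply le_of_tendsto_of_tendsto (hcoord b) (hcoord a)
      filter_upwards [hmem2] with k hk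
      exact hwanti _ hk a b hab
    have hveval : ∀ y : ℝ, (Q t₀).eval y = ∏ j : Fin n, (y - v j) := by
      intro y
      have hA : Tendsto (fun k => (Q (u (ns (φ k)))).eval y) atTop (nhds ((Q t₀).eval y)) :=
        ((hevalt y).tendsto t₀).comp hm
      have h3 : Tendsto (fun k => ∏ j : Fin n, (y - w (u (ns (φ k))) j)) atTop
          (nhds (∏ j : Fin n, (y - v j))) := by
        apply tendsto_finset_prod
        intro j _
        exact tendsto_const_nhds.sub (hcoord j)
      have hB : Tendsto (fun k => (Q (u (ns (φ k)))).eval y) atTop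
          (nhds (∏ j : Fin n, (y - v j))) := by
        apply h3.congr'
        filter_upwards [hmem2] with k hk
        exact (heval _ hk y).symm
      exact tendsto_nhds_unique hA hB
    have hQt₀ : Q t₀ = ∏ j : Fin n, (X - C (v j)) := by
      apply Polynomial.funext
      intro y
      rw [hveval y, eval_prod_X_sub_C_fin]
    have hofn : List.ofFn v = descRoots (Q t₀) := by
      refine (fun h1 h2 h3 => List.Perm.eq_of_pairwise' (r := (· ≥ ·)) h2 h3 h1) ?_ ?_ ?_
      · rw [← Multiset.coe_eq_coe, descRoots_coe, hQt₀, roots_prod_X_sub_C_fin]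
      · rw [List.pairwise_ofFn]
        intro a b hab
        exact hvsort a b hab.le
      · exact descRoots_sorted _
    have hv : v = w t₀ := by
      funext j
      have hjl : (j : ℕ) < (List.ofFn v).length := by
        rw [List.length_ofFn]; exact j.isLt
      have h4 : (List.ofFn v).getD (j : ℕ) 0 = v j := by
        rw [List.getD_eq_getElem _ _ hjl]
        simp
      have h5 : w t₀ j = (descRoots (Q t₀)).getD (j : ℕ) 0 := rfl
      rw [h5, ← hofn, h4]
    rw [← hv]
    exact hφtd
  -- i-th largest root as w
  have hj : i - 1 < n := by omega
  set j₀ : Fin n := ⟨i - 1, hj⟩ with hj₀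
  set f : ℝ → ℝ := fun s => w s j₀ with hfdef
  have hfnth : ∀ s : ℝ, nthLargestRoot (Q s) i = f s := fun s => rfl
  have hfcont : ContinuousOn f I := by
    intro t₀ ht₀
    exact ((continuous_apply j₀).tendsto (w t₀)).comp (hwcont t₀ ht₀)
  have hfroot : ∀ s ∈ I, (Q s).IsRoot (f s) :=
    fun s hs => isRoot_of_mem_roots (hwroot s hs j₀)
  have hQeval : ∀ s y : ℝ, (Q s).eval y = (1 - s) * p₀.eval y + s * p₁.eval y := by
    intro s y
    show eval y (C (1 - s) * p₀ + C s * p₁) = _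
    simp [eval_add, eval_mul, eval_C]
  have h0I : (0 : ℝ) ∈ I := by rw [hI]; constructor <;> norm_num
  have h1I : (1 : ℝ) ∈ I := by rw [hI]; constructor <;> norm_num
  have key : ∀ s ∈ I, f s ≤ max (f 0) (f 1) ∧ min (f 0) (f 1) ≤ f s := by
    intro s hsI
    have hs0 : (0 : ℝ) ≤ s := hsI.1
    have hs1 : s ≤ 1 := hsI.2
    have hc1 : ContinuousOn f (Set.Icc 0 s) :=
      hfcont.mono (Set.Icc_subset_Icc le_rfl hs1)
    have hc2 : ContinuousOn f (Set.Icc s 1) :=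
      hfcont.mono (Set.Icc_subset_Icc hs0 le_rfl)
    have hfin : Set.Finite { x : ℝ | p₀.IsRoot x } := finite_setOf_isRoot h₀m.ne_zero
    have main : ∀ t₁ t₂ x : ℝ, t₁ ∈ Set.Ioo 0 s → t₂ ∈ Set.Ioo s 1 →
        f t₁ = x → f t₂ = x → p₀.IsRoot x := by
      intro t₁ t₂ x ht₁ ht₂ hf₁ hf₂
      have ht₁I : t₁ ∈ I := by
        rw [hI]; exact ⟨ht₁.1.le, ht₁.2.le.trans hs1⟩
      have ht₂I : t₂ ∈ I := by
        rw [hI]; exact ⟨hs0.trans ht₂.1.le, ht₂.2.le⟩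
      have hr₁ : (Q t₁).eval x = 0 := by rw [← hf₁]; exact hfroot t₁ ht₁I
      have hr₂ : (Q t₂).eval x = 0 := by rw [← hf₂]; exact hfroot t₂ ht₂I
      rw [hQeval] at hr₁ hr₂
      have htne : t₂ - t₁ ≠ 0 := by
        have : t₁ < t₂ := ht₁.2.trans ht₂.1
        intro h; linarith
      have hab : p₀.eval x - p₁.eval x = 0 := by
        rcases mul_eq_zero.mp (show (t₂ - t₁) * (p₀.eval x - p₁.eval x) = 0 by
          linear_combination hr₁ - hr₂) with h | h
        · exact absurd h htne
        · exact h
      show p₀.eval x = 0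
      linear_combination hr₁ + t₁ * hab
    constructor
    · by_contra hcon
      push_neg at hcon
      obtain ⟨x, hxI, hxR⟩ := ((Set.Ioo_infinite hcon).diff hfin).nonempty
      have hx1 : x ∈ Set.Ioo (f 0) (f s) :=
        ⟨(le_max_left _ _).trans_lt hxI.1, hxI.2⟩
      have hx2 : x ∈ Set.Ioo (f 1) (f s) :=
        ⟨(le_max_right _ _).trans_lt hxI.1, hxI.2⟩
      obtain ⟨t₁, ht₁, hft₁⟩ := intermediate_value_Ioo hs0 hc1 hx1
      obtain ⟨t₂, ht₂, hft₂⟩ := intermediate_value_Ioo' hs1 hc2 hx2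
      exact hxR (main t₁ t₂ x ht₁ ht₂ hft₁ hft₂)
    · by_contra hcon
      push_neg at hcon
      obtain ⟨x, hxI, hxR⟩ := ((Set.Ioo_infinite hcon).diff hfin).nonempty
      have hx1 : x ∈ Set.Ioo (f s) (f 0) :=
        ⟨hxI.1, hxI.2.trans_le (min_le_left _ _)⟩
      have hx2 : x ∈ Set.Ioo (f s) (f 1) :=
        ⟨hxI.1, hxI.2.trans_le (min_le_right _ _)⟩
      obtain ⟨t₁, ht₁, hft₁⟩ := intermediate_value_Ioo' hs0 hc1 hx1
      obtain ⟨t₂, ht₂, hft₂⟩ := intermediate_value_Ioo hs1 hc2 hx2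
      exact hxR (main t₁ t₂ x ht₁ ht₂ hft₁ hft₂)
  have e0 : nthLargestRoot p₀ i = f 0 := by rw [← hQ0]; exact hfnth 0
  have e1 : nthLargestRoot p₁ i = f 1 := by rw [← hQ1]; exact hfnth 1
  have et : nthLargestRoot (C (1 - t) * p₀ + C t * p₁) i = f t := hfnth t
  rw [e0, e1, et]
  obtain ⟨hu, hl⟩ := key t ht
  exact ⟨hl, hu⟩
end

section
/- Let H be a finite simple graph on n vertices with edge set E. Then the average over all signings s: E → {−1,+1} of the characteristic polynomial det(zI − A_{H,s}) equals the matching polynomial M_H(z) = Σ_{k=0}^{⌊n/2⌋} (−1)^k m_k(H) z^{n−2k}. -/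
open Polynomial Matrix

/-- The signed adjacency matrix of `H` determined by a sign pattern `σ` on unordered pairs
(`true ↦ +1`, `false ↦ -1`): the `(i,j)` entry is `±1` when `ij` is an edge and `0`
otherwise. -/
def signedAdjMatrix {n : ℕ} (H : SimpleGraph (Fin n)) [DecidableRel H.Adj]
    (σ : Sym2 (Fin n) → Bool) : Matrix (Fin n) (Fin n) ℝ :=
  Matrix.of fun i j => if H.Adj i j then (if σ s(i, j) then 1 else -1) else 0

/-- `matchingCount H k` is the number `m_k(H)` of matchings with `k` edges in `H`,
i.e. sets of `k` pairwise vertex-disjoint edges (so `m_0(H) = 1`). -/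
noncomputable def matchingCount {n : ℕ} (H : SimpleGraph (Fin n)) [DecidableRel H.Adj]
    (k : ℕ) : ℕ :=
  Set.ncard {M : Finset (Sym2 (Fin n)) | (M : Set (Sym2 (Fin n))) ⊆ H.edgeSet ∧ M.card = k ∧
    ∀ e ∈ M, ∀ f ∈ M, e ≠ f → ∀ v : Fin n, ¬(v ∈ e ∧ v ∈ f)}

/-- The matching polynomial `M_H(z) = ∑_{k=0}^{⌊n/2⌋} (-1)^k m_k(H) z^{n-2k}`. -/
noncomputable def matchingPolynomial {n : ℕ} (H : SimpleGraph (Fin n))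
    [DecidableRel H.Adj] : Polynomial ℝ :=
  ∑ k ∈ Finset.range (n / 2 + 1), C ((-1 : ℝ) ^ k * (matchingCount H k : ℝ)) * X ^ (n - 2 * k)

namespace GodsilGutmanAux
set_option linter.unusedSectionVars false

open Finset Equiv

variable {n : ℕ} (H : SimpleGraph (Fin n)) [DecidableRel H.Adj]

/-- The matching predicate (without cardinality). -/
def Pm (M : Finset (Sym2 (Fin n))) : Prop :=
  (∀ e ∈ M, e ∈ H.edgeSet) ∧
    ∀ e ∈ M, ∀ f ∈ M, e ≠ f → ∀ v : Fin n, ¬(v ∈ e ∧ v ∈ f)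

variable {H}

lemma Pm.unique {M : Finset (Sym2 (Fin n))} (hM : Pm H M) {e f : Sym2 (Fin n)} {v : Fin n}
    (he : e ∈ M) (hf : f ∈ M) (hv : v ∈ e) (hv' : v ∈ f) : e = f := by
  by_contra h
  exact hM.2 e he f hf h v ⟨hv, hv'⟩

open scoped Classical in
/-- the partner function of a matching -/
noncomputable def fM (M : Finset (Sym2 (Fin n))) (v : Fin n) : Fin n :=
  if h : ∃ e ∈ M, v ∈ e then Sym2.Mem.other' h.choose_spec.2 else v

lemma fM_spec {M : Finset (Sym2 (Fin n))} (hM : Pm H M) {v : Fin n} {e : Sym2 (Fin n)}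
    (he : e ∈ M) (hv : v ∈ e) :
    fM M v ∈ e ∧ s(v, fM M v) = e ∧ fM M v ≠ v := by
  classical
  have h : ∃ e ∈ M, v ∈ e := ⟨e, he, hv⟩
  have he0 : h.choose ∈ M := h.choose_spec.1
  have hv0 : v ∈ h.choose := h.choose_spec.2
  have hee : h.choose = e := hM.unique he0 he hv0 hv
  have hfm : fM M v = Sym2.Mem.other' hv0 := by
    rw [fM, dif_pos h]
  have hd : ¬ (h.choose).IsDiag := H.not_isDiag_of_mem_edgeSet (hM.1 _ he0)
  refine ⟨?_, ?_, ?_⟩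
  · rw [hfm, ← hee]; exact Sym2.other_mem' hv0
  · rw [hfm, ← hee]; exact Sym2.other_spec' hv0
  · rw [hfm, ← Sym2.other_eq_other']; exact Sym2.other_ne hd hv0

lemma fM_id {M : Finset (Sym2 (Fin n))} {v : Fin n} (h : ¬ ∃ e ∈ M, v ∈ e) : fM M v = v := by
  classical
  rw [fM, dif_neg h]

lemma fM_invol {M : Finset (Sym2 (Fin n))} (hM : Pm H M) : Function.Involutive (fM M) := by
  intro v
  by_cases h : ∃ e ∈ M, v ∈ e
  · obtain ⟨e, he, hv⟩ := h
    obtain ⟨h1, h2, -⟩ := fM_spec hM he hv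
    obtain ⟨h1', h2', -⟩ := fM_spec hM he h1
    have : s(fM M v, fM M (fM M v)) = s(fM M v, v) := by
      rw [h2', ← h2, Sym2.eq_swap]
    exact Sym2.congr_right.mp this
  · have h1 := fM_id h
    rw [h1, h1]

open scoped Classical in
noncomputable def permOf (M : Finset (Sym2 (Fin n))) : Perm (Fin n) :=
  if h : Function.Involutive (fM M) then h.toPerm else 1

lemma permOf_apply {M : Finset (Sym2 (Fin n))} (hM : Pm H M) (v : Fin n) :
    permOf M v = fM M v := by
  classical
  rw [permOf, dif_pos (fM_invol hM)]; rfl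

variable (H)

/-- good permutations: involutions supported on edges -/
def Good (π : Perm (Fin n)) : Prop :=
  Function.Involutive π ∧ ∀ i : Fin n, π i ≠ i → s(π i, i) ∈ H.edgeSet

variable {H}

/-- the matching associated to a permutation -/
def Mof (π : Perm (Fin n)) : Finset (Sym2 (Fin n)) :=
  π.support.image fun i => s(π i, i)

lemma mem_Mof {π : Perm (Fin n)} {e : Sym2 (Fin n)} :
    e ∈ Mof π ↔ ∃ i, π i ≠ i ∧ s(π i, i) = e := by
  simp [Mof, Perm.mem_support]

lemma sym2_eq_of_mem {π : Perm (Fin n)} (hπ : Function.Involutive π) {i v : Fin n}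
    (hi : π i ≠ i) (hv : v ∈ s(π i, i)) : s(π v, v) = s(π i, i) := by
  rw [Sym2.mem_iff] at hv
  rcases hv with rfl | rfl
  · rw [hπ i, Sym2.eq_swap]
  · rfl

lemma Pm_Mof {π : Perm (Fin n)} (hπ : Good H π) : Pm H (Mof π) := by
  constructor
  · intro e he
    obtain ⟨i, hi, rfl⟩ := mem_Mof.mp he
    exact hπ.2 i hi
  · rintro e he f hf hef v ⟨hve, hvf⟩
    obtain ⟨i, hi, rfl⟩ := mem_Mof.mp he
    obtain ⟨j, hj, rfl⟩ := mem_Mof.mp hf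
    exact hef ((sym2_eq_of_mem hπ.1 hi hve).symm.trans (sym2_eq_of_mem hπ.1 hj hvf))

lemma Mof_permOf {M : Finset (Sym2 (Fin n))} (hM : Pm H M) : Mof (permOf M) = M := by
  ext e
  rw [mem_Mof]
  constructor
  · rintro ⟨i, hi, rfl⟩
    rw [permOf_apply hM] at hi ⊢
    have h : ∃ e ∈ M, i ∈ e := by
      by_contra h
      exact hi (fM_id h)
    obtain ⟨e', he', hie'⟩ := h
    obtain ⟨-, h2, -⟩ := fM_spec hM he' hie'
    rwa [Sym2.eq_swap, h2]
  · intro he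
    have hv : e.out.1 ∈ e := Sym2.out_fst_mem e
    obtain ⟨-, h2, h3⟩ := fM_spec hM he hv
    exact ⟨e.out.1, by rwa [permOf_apply hM], by rw [permOf_apply hM, Sym2.eq_swap, h2]⟩

lemma Good_permOf {M : Finset (Sym2 (Fin n))} (hM : Pm H M) : Good H (permOf M) := by
  constructor
  · intro v
    rw [permOf_apply hM, permOf_apply hM]
    exact fM_invol hM v
  · intro i hi
    rw [permOf_apply hM] at hi ⊢
    have h : ∃ e ∈ M, i ∈ e := by
      by_contra h
      exact hi (fM_id h)
    obtain ⟨e', he', hie'⟩ := h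
    obtain ⟨-, h2, -⟩ := fM_spec hM he' hie'
    rw [Sym2.eq_swap, h2]
    exact hM.1 _ he'

lemma permOf_Mof {π : Perm (Fin n)} (hπ : Good H π) : permOf (Mof π) = π := by
  have hM := Pm_Mof hπ
  refine Equiv.ext fun v => ?_
  by_cases hv : π v = v
  · rw [permOf_apply hM, hv, fM_id]
    rintro ⟨e, he, hve⟩
    obtain ⟨i, hi, rfl⟩ := mem_Mof.mp he
    have h := sym2_eq_of_mem hπ.1 hi hve
    rw [hv, Sym2.eq_iff] at h
    apply hi
    rcases h with ⟨h1, h2⟩ | ⟨h1, h2⟩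
    · rw [← h1]; exact h2
    · rw [← h2]; exact h1
  · have he : s(π v, v) ∈ Mof π := mem_Mof.mpr ⟨v, hv, rfl⟩
    have hve : v ∈ s(π v, v) := Sym2.mem_mk_right _ _
    obtain ⟨-, h2, -⟩ := fM_spec hM he hve
    rw [permOf_apply hM]
    rw [Sym2.eq_iff] at h2
    rcases h2 with ⟨h3, h4⟩ | ⟨h3, h4⟩
    · exact absurd h3.symm hv
    · exact h4

lemma filter_mem_sym2 {a b : Fin n} (hab : a ≠ b) :
    (univ.filter (· ∈ s(a, b))).card = 2 := by
  have : (univ.filter (· ∈ s(a, b))) = {a, b} := by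
    ext x
    simp [Sym2.mem_iff]
  rw [this, card_insert_of_notMem (by simp [hab]), card_singleton]

lemma exists_ne_of_edge {e : Sym2 (Fin n)} (he : e ∈ H.edgeSet) :
    ∃ a b : Fin n, a ≠ b ∧ e = s(a, b) := by
  induction e with
  | _ a b => exact ⟨a, b, H.ne_of_adj ((SimpleGraph.mem_edgeSet H).mp he), rfl⟩

lemma card_biUnion_eq {M : Finset (Sym2 (Fin n))} (hM : Pm H M) :
    (M.biUnion fun e => univ.filter (· ∈ e)).card = 2 * M.card := by
  rw [card_biUnion]
  · rw [Finset.sum_congr rfl (fun e he => ?_), Finset.sum_const, smul_eq_mul, mul_comm]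
    obtain ⟨a, b, hab, rfl⟩ := exists_ne_of_edge (hM.1 e he)
    exact filter_mem_sym2 hab
  · intro e he f hf hef
    rw [Function.onFun, Finset.disjoint_left]
    intro v hv hv'
    simp only [mem_filter] at hv hv'
    exact hM.2 e he f hf hef v ⟨hv.2, hv'.2⟩

lemma two_mul_card_le {M : Finset (Sym2 (Fin n))} (hM : Pm H M) : 2 * M.card ≤ n := by
  rw [← card_biUnion_eq hM]
  simpa using (card_le_card (Finset.subset_univ (M.biUnion fun e => univ.filter (· ∈ e))))

lemma support_eq_biUnion {π : Perm (Fin n)} (hπ : Good H π) :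
    π.support = (Mof π).biUnion fun e => univ.filter (· ∈ e) := by
  ext i
  simp only [Finset.mem_biUnion, mem_filter, mem_univ, true_and, Perm.mem_support]
  constructor
  · intro hi
    exact ⟨s(π i, i), mem_Mof.mpr ⟨i, hi, rfl⟩, Sym2.mem_mk_right _ _⟩
  · rintro ⟨e, he, hie⟩
    obtain ⟨j, hj, rfl⟩ := mem_Mof.mp he
    intro hii
    have h := sym2_eq_of_mem hπ.1 hj hie
    rw [hii, Sym2.eq_iff] at h
    apply hj
    rcases h with ⟨h1, h2⟩ | ⟨h1, h2⟩
    · rw [← h1]; exact h2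
    · rw [← h2]; exact h1

lemma support_card_eq {π : Perm (Fin n)} (hπ : Good H π) :
    π.support.card = 2 * (Mof π).card := by
  rw [support_eq_biUnion hπ, card_biUnion_eq (Pm_Mof hπ)]

lemma fp_card (π : Perm (Fin n)) :
    (univ.filter fun i => π i = i).card = n - π.support.card := by
  have h1 : π.support = univ.filter fun i => ¬ π i = i := by
    ext i; simp [Perm.mem_support]
  have h2 := Finset.card_filter_add_card_filter_not (s := (univ : Finset (Fin n)))
    (p := fun i => π i = i)
  rw [← h1] at h2
  have h3 : (univ : Finset (Fin n)).card = n := by simp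
  omega

lemma sign_aux : ∀ c : ℕ, ∀ π : Perm (Fin n), Function.Involutive π → π.support.card = c →
    ∃ k, c = 2 * k ∧ Perm.sign π = (-1) ^ k := by
  intro c
  induction c using Nat.strong_induction_on with
  | _ c ih =>
    intro π hπ hc
    rcases eq_or_ne c 0 with rfl | hc0
    · refine ⟨0, rfl, ?_⟩
      have : π.support = ∅ := Finset.card_eq_zero.mp hc
      rw [Perm.support_eq_empty_iff.mp this]
      simp
    · have hne : π.support.Nonempty := Finset.card_ne_zero.mp (hc ▸ hc0)
      obtain ⟨a, ha⟩ := hne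
      have ha' : π a ≠ a := Perm.mem_support.mp ha
      set b := π a with hb
      have hba : b ≠ a := ha'
      have hπb : π b = a := hπ a
      set π' := Equiv.swap a b * π with hπ'
      have h'a : π' a = a := by
        rw [hπ', Perm.mul_apply, ← hb, Equiv.swap_apply_right]
      have h'b : π' b = b := by
        rw [hπ', Perm.mul_apply, hπb, Equiv.swap_apply_left]
      have h'v : ∀ v, v ≠ a → v ≠ b → π' v = π v ∧ π v ≠ a ∧ π v ≠ b := by
        intro v hva hvb
        have h1 : π v ≠ a := fun h => hvb (by rw [hb, ← h, hπ v])
        have h2 : π v ≠ b := fun h => hva (π.injective (h.trans hb))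
        exact ⟨by rw [hπ', Perm.mul_apply, Equiv.swap_apply_of_ne_of_ne h1 h2], h1, h2⟩
      have hinvol : Function.Involutive π' := by
        intro v
        by_cases hva : v = a
        · rw [hva, h'a, h'a]
        by_cases hvb : v = b
        · rw [hvb, h'b, h'b]
        · obtain ⟨he, h1, h2⟩ := h'v v hva hvb
          rw [he, (h'v (π v) h1 h2).1, hπ v]
      have hsupp : π'.support = π.support \ {a, b} := by
        ext v
        by_cases hva : v = a
        · simp [hva, Perm.mem_support, h'a]
        by_cases hvb : v = b
        · simp [hvb, Perm.mem_support, h'b]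
        · simp only [Perm.mem_support, Finset.mem_sdiff, Finset.mem_insert,
            Finset.mem_singleton, (h'v v hva hvb).1]
          tauto
      have hab_sub : {a, b} ⊆ π.support := by
        intro x hx
        simp only [Finset.mem_insert, Finset.mem_singleton] at hx
        rcases hx with rfl | rfl
        · exact ha
        · exact Perm.mem_support.mpr (by rw [hπb]; exact hba.symm)
      have hcard2 : ({a, b} : Finset (Fin n)).card = 2 := by
        rw [card_insert_of_notMem (by simp [hba.symm]), card_singleton]
      have hsc : π'.support.card = c - 2 := by
        rw [hsupp, card_sdiff_of_subset hab_sub, hcard2, hc]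
      have hcge : 2 ≤ c := by
        rw [← hc, ← hcard2]
        exact card_le_card hab_sub
      obtain ⟨k', hk1, hk2⟩ := ih (c - 2) (by omega) π' hinvol hsc
      refine ⟨k' + 1, by omega, ?_⟩
      have hππ' : π = Equiv.swap a b * π' := by
        rw [hπ', ← mul_assoc, Equiv.swap_mul_self, one_mul]
      rw [hππ', _root_.map_mul, hk2, Equiv.Perm.sign_swap hba.symm, pow_add, pow_one, mul_comm]

lemma sign_good {π : Perm (Fin n)} (hπ : Good H π) :
    Perm.sign π = (-1) ^ (Mof π).card := by
  obtain ⟨k, hk1, hk2⟩ := sign_aux π.support.card π hπ.1 rfl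
  have := support_card_eq hπ
  have hkk : k = (Mof π).card := by omega
  rwa [hkk] at hk2

variable (H)

open scoped Classical in
/-- entry value as a function of the edge and its sign -/
noncomputable def F (e : Sym2 (Fin n)) (b : Bool) : Polynomial ℝ :=
  -C (if e ∈ H.edgeSet then (if b then 1 else -1) else 0)

/-- multiplicity of an edge in a permutation -/
def mult (π : Perm (Fin n)) (e : Sym2 (Fin n)) : ℕ :=
  (π.support.filter fun i => s(π i, i) = e).card

lemma prod_charmatrix (π : Perm (Fin n)) (σ : Sym2 (Fin n) → Bool) :
    ∏ i, charmatrix (signedAdjMatrix H σ) (π i) i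
      = X ^ (univ.filter fun i => π i = i).card *
        ∏ e : Sym2 (Fin n), F H e (σ e) ^ mult π e := by
  classical
  have step1 : ∀ i : Fin n, charmatrix (signedAdjMatrix H σ) (π i) i
      = if π i = i then X else F H s(π i, i) (σ s(π i, i)) := by
    intro i
    by_cases h : π i = i
    · rw [if_pos h, h, charmatrix_apply_eq]
      have h0 : signedAdjMatrix H σ i i = 0 := by
        simp [signedAdjMatrix]
      rw [h0, map_zero, sub_zero]
    · rw [if_neg h, charmatrix_apply_ne _ _ _ h]
      have h0 : signedAdjMatrix H σ (π i) i
          = if s(π i, i) ∈ H.edgeSet then (if σ s(π i, i) then 1 else -1) else 0 := by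
        simp only [signedAdjMatrix, Matrix.of_apply, SimpleGraph.mem_edgeSet]
      rw [F, h0]
  have hsupp : (univ.filter fun i => ¬ π i = i) = π.support := by
    ext i; simp [Perm.mem_support]
  have h2 : ∏ i ∈ π.support, F H s(π i, i) (σ s(π i, i))
      = ∏ e : Sym2 (Fin n), F H e (σ e) ^ mult π e := by
    rw [← Finset.prod_fiberwise π.support (fun i => s(π i, i))
      (fun i => F H s(π i, i) (σ s(π i, i)))]
    refine Finset.prod_congr rfl fun e _ => ?_
    rw [Finset.prod_congr rfl (fun i hi => ?_), Finset.prod_const, mult]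
    rw [(Finset.mem_filter.mp hi).2]
  rw [Finset.prod_congr rfl fun i _ => step1 i, Finset.prod_ite, Finset.prod_const, hsupp, h2]

lemma sum_sigma_prod (π : Perm (Fin n)) :
    ∑ σ : Sym2 (Fin n) → Bool, ∏ i, charmatrix (signedAdjMatrix H σ) (π i) i
      = X ^ (univ.filter fun i => π i = i).card *
        ∏ e : Sym2 (Fin n), ∑ b : Bool, F H e b ^ mult π e := by
  classical
  rw [Finset.sum_congr rfl fun σ _ => prod_charmatrix H π σ, ← Finset.mul_sum]
  congr 1
  rw [Finset.prod_univ_sum (fun _ => (univ : Finset Bool)) (fun e b => F H e b ^ mult π e),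
    Fintype.piFinset_univ]

variable {H}

lemma G_two {π : Perm (Fin n)} {e : Sym2 (Fin n)}
    (h : mult π e = 0 ∨ (mult π e = 2 ∧ e ∈ H.edgeSet)) :
    ∑ b : Bool, F H e b ^ mult π e = 2 := by
  classical
  rcases h with h | ⟨h, he⟩
  · simp [h]
  · rw [h, Fintype.sum_bool]
    norm_num [F, he]

lemma G_zero_one {π : Perm (Fin n)} {e : Sym2 (Fin n)} (h : mult π e = 1) :
    ∑ b : Bool, F H e b ^ mult π e = 0 := by
  classical
  rw [h, Fintype.sum_bool]
  by_cases he : e ∈ H.edgeSet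
  · norm_num [F, he]
  · norm_num [F, he]

lemma G_zero_nonedge {π : Perm (Fin n)} {e : Sym2 (Fin n)} (he : e ∉ H.edgeSet)
    (h : mult π e ≠ 0) : ∑ b : Bool, F H e b ^ mult π e = 0 := by
  classical
  rw [Fintype.sum_bool]
  norm_num [F, he, zero_pow h]

lemma mult_eq_one_of_not_invol {π : Perm (Fin n)} (h : ¬ Function.Involutive π) :
    ∃ e, mult π e = 1 := by
  rw [Function.Involutive] at h
  push_neg at h
  obtain ⟨a, ha⟩ := h
  have ha' : π a ≠ a := fun h' => ha (by rw [h', h'])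
  refine ⟨s(π a, a), ?_⟩
  have : π.support.filter (fun i => s(π i, i) = s(π a, a)) = {a} := by
    ext i
    simp only [Finset.mem_filter, Perm.mem_support, Finset.mem_singleton]
    constructor
    · rintro ⟨hi, heq⟩
      rw [Sym2.eq_iff] at heq
      rcases heq with ⟨h1, h2⟩ | ⟨h1, h2⟩
      · exact h2
      · exact absurd (by rw [← h2, h1]) ha
    · rintro rfl
      exact ⟨ha', rfl⟩
  rw [mult, this, card_singleton]

lemma mult_nonzero {π : Perm (Fin n)} {i : Fin n} (hi : π i ≠ i) :
    mult π s(π i, i) ≠ 0 := by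
  rw [mult]
  exact Finset.card_ne_zero_of_mem (Finset.mem_filter.mpr ⟨Perm.mem_support.mpr hi, rfl⟩)

lemma mult_good {π : Perm (Fin n)} (hπ : Good H π) (e : Sym2 (Fin n)) :
    mult π e = 0 ∨ (mult π e = 2 ∧ e ∈ H.edgeSet) := by
  by_cases hex : ∃ a, a ∈ π.support.filter (fun i => s(π i, i) = e)
  · obtain ⟨a, ha⟩ := hex
    rw [Finset.mem_filter, Perm.mem_support] at ha
    obtain ⟨ha1, ha2⟩ := ha
    right
    constructor
    · have hfil : π.support.filter (fun i => s(π i, i) = e) = {a, π a} := by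
        ext i
        simp only [Finset.mem_filter, Perm.mem_support, Finset.mem_insert, Finset.mem_singleton]
        constructor
        · rintro ⟨hi, heq⟩
          rw [← ha2, Sym2.eq_iff] at heq
          rcases heq with ⟨h1, h2⟩ | ⟨h1, h2⟩
          · left; exact h2
          · right; exact h2
        · rintro (rfl | rfl)
          · exact ⟨ha1, ha2⟩
          · refine ⟨?_, ?_⟩
            · rw [hπ.1 a]; exact fun h => ha1 h.symm
            · rw [hπ.1 a, ← ha2, Sym2.eq_swap]
      rw [mult, hfil, card_insert_of_notMem (by simp only [Finset.mem_singleton]; exact fun h => ha1 h.symm), card_singleton]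
    · rw [← ha2]
      exact hπ.2 a ha1
  · left
    rw [mult, Finset.card_eq_zero]
    exact Finset.eq_empty_of_forall_notMem (by push_neg at hex; exact hex)

lemma T_good {π : Perm (Fin n)} (hπ : Good H π) :
    ∑ σ : Sym2 (Fin n) → Bool, ∏ i, charmatrix (signedAdjMatrix H σ) (π i) i
      = X ^ (n - 2 * (Mof π).card) * (2 : Polynomial ℝ) ^ Fintype.card (Sym2 (Fin n)) := by
  rw [sum_sigma_prod, fp_card, support_card_eq hπ]
  congr 1
  rw [Finset.prod_congr rfl fun e _ => G_two (mult_good hπ e), Finset.prod_const, card_univ]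

lemma T_bad {π : Perm (Fin n)} (hπ : ¬ Good H π) :
    ∑ σ : Sym2 (Fin n) → Bool, ∏ i, charmatrix (signedAdjMatrix H σ) (π i) i = 0 := by
  rw [sum_sigma_prod]
  rw [Good] at hπ
  by_cases hinv : Function.Involutive π
  · push_neg at hπ
    obtain ⟨i, hi, hie⟩ := hπ hinv
    rw [Finset.prod_eq_zero (Finset.mem_univ s(π i, i))
      (G_zero_nonedge hie (mult_nonzero hi)), mul_zero]
  · obtain ⟨e, he⟩ := mult_eq_one_of_not_invol hinv
    rw [Finset.prod_eq_zero (Finset.mem_univ e) (G_zero_one he), mul_zero]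

open scoped Classical in
lemma count_eq (k : ℕ) :
    ((univ.filter fun M : Finset (Sym2 (Fin n)) => Pm H M ∧ M.card = k)).card
      = matchingCount H k := by
  classical
  rw [matchingCount, ← Set.ncard_coe_finset]
  congr 1
  ext M
  rw [Finset.mem_coe, Finset.mem_filter]
  simp only [Finset.coe_filter, Set.mem_setOf_eq, Finset.mem_univ, true_and, Pm]
  constructor
  · rintro ⟨⟨h1, h2⟩, h3⟩
    exact ⟨fun e he => h1 e he, h3, h2⟩
  · rintro ⟨h1, h2, h3⟩
    exact ⟨⟨fun e he => h1 he, h3⟩, h2⟩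

end GodsilGutmanAux

open GodsilGutmanAux Finset in
/-- **Godsil–Gutman**: the average of the characteristic polynomials `det(zI - A_{H,s})`
over all signings `s` of the edges of `H` equals the matching polynomial of `H`.
(Averaging over sign patterns on all unordered pairs agrees with averaging over signings of
the edges, since the signed adjacency matrix depends only on the signs of the edges.) -/
theorem godsil_gutman (n : ℕ) (H : SimpleGraph (Fin n)) [DecidableRel H.Adj] :
    ((Fintype.card (Sym2 (Fin n) → Bool) : ℝ))⁻¹ •
        ∑ σ : Sym2 (Fin n) → Bool, (signedAdjMatrix H σ).charpoly =
      matchingPolynomial H := by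
  classical
  set E := Fintype.card (Sym2 (Fin n)) with hE
  have hcard : (Fintype.card (Sym2 (Fin n) → Bool) : ℝ) = 2 ^ E := by
    rw [Fintype.card_fun, Fintype.card_bool]
    push_cast
    rfl
  have h1 : ∑ σ : Sym2 (Fin n) → Bool, (signedAdjMatrix H σ).charpoly
      = ∑ π : Equiv.Perm (Fin n), Equiv.Perm.sign π •
          ∑ σ : Sym2 (Fin n) → Bool, ∏ i, charmatrix (signedAdjMatrix H σ) (π i) i := by
    rw [Finset.sum_congr rfl fun σ _ => ?_, Finset.sum_comm]
    · exact Finset.sum_congr rfl fun π _ => (Finset.smul_sum).symm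
    · rw [Matrix.charpoly, Matrix.det_apply]
  have h2 : ∀ π : Equiv.Perm (Fin n), Good H π →
      Equiv.Perm.sign π • (∑ σ : Sym2 (Fin n) → Bool,
          ∏ i, charmatrix (signedAdjMatrix H σ) (π i) i)
        = ((2 : ℝ) ^ E) • (C ((-1 : ℝ) ^ (Mof π).card) * X ^ (n - 2 * (Mof π).card)) := by
    intro π hπ
    rw [T_good hπ, sign_good hπ, Units.smul_def]
    have hu : (((-1 : ℤˣ) ^ (Mof π).card : ℤˣ) : ℤ) = (-1) ^ (Mof π).card := by
      push_cast
      rfl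
    rw [hu, zsmul_eq_mul, Polynomial.smul_eq_C_mul]
    push_cast
    simp only [map_pow, map_neg, _root_.map_one, map_ofNat]
    ring
  have h3 : ∑ π : Equiv.Perm (Fin n), Equiv.Perm.sign π •
        ∑ σ : Sym2 (Fin n) → Bool, ∏ i, charmatrix (signedAdjMatrix H σ) (π i) i
      = ∑ π ∈ univ.filter (fun π => Good H π),
          ((2 : ℝ) ^ E) • (C ((-1 : ℝ) ^ (Mof π).card) * X ^ (n - 2 * (Mof π).card)) := by
    rw [← Finset.sum_filter_of_ne (p := fun π => Good H π) ?_]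
    · exact Finset.sum_congr rfl fun π hπ => h2 π ((Finset.mem_filter.mp hπ).2)
    · intro π _ hne
      by_contra hg
      exact hne (by rw [T_bad hg, smul_zero])
  have h4 : ∀ π ∈ univ.filter (fun π => Good H π),
      (↑(Fintype.card (Sym2 (Fin n) → Bool)) : ℝ)⁻¹ •
          ((2 : ℝ) ^ E) • (C ((-1 : ℝ) ^ (Mof π).card) * X ^ (n - 2 * (Mof π).card))
        = C ((-1 : ℝ) ^ (Mof π).card) * X ^ (n - 2 * (Mof π).card) := by
    intro π _
    rw [smul_smul, hcard, inv_mul_cancel₀ (by positivity), one_smul]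
  rw [h1, h3, Finset.smul_sum, Finset.sum_congr rfl h4]
  have h5 : ∑ π ∈ univ.filter (fun π => Good H π),
        C ((-1 : ℝ) ^ (Mof π).card) * X ^ (n - 2 * (Mof π).card)
      = ∑ M ∈ univ.filter (fun M : Finset (Sym2 (Fin n)) => Pm H M),
          C ((-1 : ℝ) ^ M.card) * X ^ (n - 2 * M.card) := by
    refine Finset.sum_nbij' (i := fun π => Mof π) (j := fun M => permOf M) ?_ ?_ ?_ ?_ ?_
    · intro π hπ
      simp only [Finset.mem_filter, Finset.mem_univ, true_and] at hπ ⊢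
      exact Pm_Mof hπ
    · intro M hM
      simp only [Finset.mem_filter, Finset.mem_univ, true_and] at hM ⊢
      exact Good_permOf hM
    · intro π hπ
      simp only [Finset.mem_filter, Finset.mem_univ, true_and] at hπ
      exact permOf_Mof hπ
    · intro M hM
      simp only [Finset.mem_filter, Finset.mem_univ, true_and] at hM
      exact Mof_permOf hM
    · intro π _
      rfl
  rw [h5]
  have h6 : ∑ M ∈ univ.filter (fun M : Finset (Sym2 (Fin n)) => Pm H M),
        C ((-1 : ℝ) ^ M.card) * X ^ (n - 2 * M.card)
      = ∑ k ∈ Finset.range (n / 2 + 1),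
          ∑ M ∈ (univ.filter fun M : Finset (Sym2 (Fin n)) => Pm H M).filter
            (fun M => M.card = k),
            C ((-1 : ℝ) ^ M.card) * X ^ (n - 2 * M.card) := by
    refine (Finset.sum_fiberwise_of_maps_to (fun M hM => ?_) _).symm
    simp only [Finset.mem_filter, Finset.mem_univ, true_and] at hM
    rw [Finset.mem_range, Nat.lt_succ_iff, Nat.le_div_iff_mul_le (by norm_num : 0 < 2),
      mul_comm]
    exact two_mul_card_le hM
  rw [h6, matchingPolynomial]
  refine Finset.sum_congr rfl fun k hk => ?_
  have hin : ∀ M ∈ (univ.filter fun M : Finset (Sym2 (Fin n)) => Pm H M).filter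
      (fun M => M.card = k),
      C ((-1 : ℝ) ^ M.card) * X ^ (n - 2 * M.card) = C ((-1 : ℝ) ^ k) * X ^ (n - 2 * k) := by
    intro M hM
    rw [(Finset.mem_filter.mp hM).2]
  rw [Finset.sum_congr rfl hin, Finset.sum_const, Finset.filter_filter, count_eq k,
    nsmul_eq_mul, ← Polynomial.C_eq_natCast, _root_.map_mul]
  ring
end

section
/- Let p and q be monic real-rooted polynomials of degree n with real coefficients. Then their Walsh convolution p ⊞_n q is a monic real-rooted polynomial of degree n. -/
open Polynomial Finset



/-- Elementary symmetric function of a list of complex numbers. -/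
def esym : ℕ → List ℂ → ℂ
  | 0, _ => 1
  | _+1, [] => 0
  | k+1, a :: l => esym (k+1) l + a * esym k l

lemma esym_zero (l : List ℂ) : esym 0 l = 1 := by cases l <;> rfl
lemma esym_nil (k : ℕ) : esym (k+1) [] = 0 := rfl
lemma esym_cons (k : ℕ) (a : ℂ) (l : List ℂ) :
    esym (k+1) (a::l) = esym (k+1) l + a * esym k l := rfl

lemma esym_eq_zero : ∀ (l : List ℂ) {k : ℕ}, l.length < k → esym k l = 0 := by
  intro l
  induction l with
  | nil => intro k hk; cases k with
    | zero => simp at hk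
    | succ k => rfl
  | cons a l ih =>
    intro k hk
    cases k with
    | zero => simp at hk
    | succ k =>
      rw [esym_cons, ih (by simp at hk ⊢; omega), ih (by simp at hk; omega)]
      ring

/-- The evaluated "polar derivative" identity: for `φ = c ∏ (X - a)`,
`n φ(ζ) + (u - ζ) φ'(ζ) = φ(ζ) ((n - d) + ∑ (u-a)/(ζ-a))`. -/
lemma polar_eval (c u ζ : ℂ) (n : ℂ) :
    ∀ l : List ℂ, (∀ a ∈ l, ζ ≠ a) →
      n * ((C c * (l.map fun a => X - C a).prod).eval ζ)
        + (u - ζ) * ((derivative (C c * (l.map fun a => X - C a).prod)).eval ζ)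
      = ((C c * (l.map fun a => X - C a).prod).eval ζ)
        * ((n - l.length) + (l.map fun a => (u - a)/(ζ - a)).sum) := by
  intro l
  induction l with
  | nil => intro _; simp [mul_comm]
  | cons a l ih =>
    intro hζ
    have hne : ζ - a ≠ 0 := sub_ne_zero.mpr (hζ a (by simp))
    have hrec : C c * ((a :: l).map fun a => X - C a).prod
        = (X - C a) * (C c * (l.map fun a => X - C a).prod) := by
      simp [List.map_cons, List.prod_cons]; ring
    set φ₁ := C c * (l.map fun a => X - C a).prod with hφ₁
    have ihl := ih (fun b hb => hζ b (by simp [hb]))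
    rw [hrec]
    simp only [derivative_mul, derivative_sub, derivative_X, derivative_C, sub_zero, one_mul,
      eval_add, eval_mul, eval_sub, eval_X, eval_C, List.map_cons, List.sum_cons,
      List.length_cons]
    have expand : n * ((ζ - a) * eval ζ φ₁) + (u - ζ) * (eval ζ φ₁ + (ζ - a) * eval ζ (derivative φ₁))
        = (ζ - a) * (n * eval ζ φ₁ + (u - ζ) * eval ζ (derivative φ₁)) + (u - ζ) * eval ζ φ₁ := by
      ring
    rw [expand, ihl]
    have : (u - ζ) = (ζ - a) * ((u - a)/(ζ - a) - 1) := by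
      field_simp
      ring
    rw [this]
    push_cast
    ring



lemma re_list_sum (l : List ℂ) : l.sum.re = (l.map Complex.re).sum := by
  induction l with
  | nil => simp
  | cons a l ih => simp [ih]

lemma list_sum_ge (c : ℝ) : ∀ l : List ℝ, (∀ x ∈ l, c ≤ x) → c * l.length ≤ l.sum := by
  intro l
  induction l with
  | nil => simp
  | cons a l ih =>
    intro h
    have h1 := h a (by simp)
    have h2 := ih (fun x hx => h x (by simp [hx]))
    simp only [List.sum_cons, List.length_cons]
    push_cast
    nlinarith

/-- The key geometric fact: the weighted sum `(n-d) + ∑ (u-a)/(ζ0-a)` is nonzero. -/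
lemma W_ne_zero {u ζ0 : ℂ} (hu : u.im < 0) (hζ : ζ0.im < 0) {n : ℕ} (hn : 1 ≤ n)
    (l : List ℂ) (hd : l.length ≤ n) (him : ∀ a ∈ l, 0 ≤ a.im) :
    ((n : ℂ) - l.length) + (l.map fun a => (u - a)/(ζ0 - a)).sum ≠ 0 := by
  set b : ℝ := -ζ0.im with hb
  have hbpos : 0 < b := by simp only [hb]; linarith
  set δ : ℂ := u - ζ0 with hδ
  set vc : ℂ := 1 + Complex.I * δ / ((2*b : ℝ) : ℂ) with hvc
  set r : ℝ := ‖δ‖ / (2*b) with hr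
  have h2b : ((2*b : ℝ) : ℂ) ≠ 0 := by
    simp only [ne_eq, Complex.ofReal_eq_zero]; positivity
  have hrnonneg : 0 ≤ r := by positivity
  -- |vc| > r
  have hvcr : r < ‖vc‖ := by
    have hδim : δ.im = u.im + b := by
      simp only [hδ, hb, Complex.sub_im]; ring
    have key : Complex.normSq δ < Complex.normSq (((2*b:ℝ):ℂ) + Complex.I * δ) := by
      simp only [Complex.normSq_apply, Complex.add_re, Complex.add_im, Complex.mul_re,
        Complex.mul_im, Complex.I_re, Complex.I_im, Complex.ofReal_re, Complex.ofReal_im]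
      nlinarith [sq_nonneg δ.re]
    have habs : ‖δ‖ < ‖((2*b:ℝ):ℂ) + Complex.I * δ‖ := by
      rw [Complex.norm_def, Complex.norm_def]
      exact Real.sqrt_lt_sqrt (Complex.normSq_nonneg _) key
    have hvc2 : vc = (((2*b:ℝ):ℂ) + Complex.I * δ) / ((2*b:ℝ):ℂ) := by
      rw [eq_div_iff h2b, hvc, add_mul, one_mul, div_mul_cancel₀ _ h2b]
    rw [hvc2, norm_div]
    have habs2b : ‖((2*b:ℝ):ℂ)‖ = 2*b := by
      rw [Complex.norm_real, Real.norm_eq_abs, abs_of_pos (by positivity)]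
    rw [habs2b, hr]
    exact div_lt_div_of_pos_right habs (by positivity)
  have hvcpos : 0 < ‖vc‖ := lt_of_le_of_lt hrnonneg hvcr
  set c0 : ℝ := ‖vc‖ * (‖vc‖ - r) with hc0
  have hc0pos : 0 < c0 := by
    apply mul_pos hvcpos; linarith
  -- each element of the disk has conj vc * v with large real part
  have hdisk : ∀ v : ℂ, ‖v - vc‖ ≤ r → c0 ≤ ((starRingEnd ℂ) vc * v).re := by
    intro v hv
    have : (starRingEnd ℂ) vc * v = (starRingEnd ℂ) vc * vc + (starRingEnd ℂ) vc * (v - vc) := by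
      ring
    rw [this]
    have h1 : ((starRingEnd ℂ) vc * vc).re = Complex.normSq vc := by
      rw [mul_comm, Complex.mul_conj, Complex.ofReal_re]
    have h2 : -(‖vc‖ * r) ≤ ((starRingEnd ℂ) vc * (v - vc)).re := by
      have habs : ‖(starRingEnd ℂ) vc * (v - vc)‖ ≤ ‖vc‖ * r := by
        rw [norm_mul, Complex.norm_conj]
        exact mul_le_mul_of_nonneg_left hv (norm_nonneg vc)
      have := Complex.abs_re_le_norm ((starRingEnd ℂ) vc * (v - vc))
      have := abs_le.mp (le_trans this habs)
      linarith [this.1]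
    simp only [Complex.add_re]
    rw [hc0]
    nlinarith [Complex.sq_norm vc]
  -- membership: 1 is in the disk
  have hmem1 : ‖(1:ℂ) - vc‖ ≤ r := by
    have : (1:ℂ) - vc = -(Complex.I * δ / ((2*b:ℝ):ℂ)) := by rw [hvc]; ring
    rw [this, norm_neg, norm_div, norm_mul, Complex.norm_I, one_mul, Complex.norm_real, Real.norm_eq_abs,
      abs_of_pos (by positivity : (0:ℝ) < 2*b)]
  -- membership: each (u-a)/(ζ0-a) is in the disk
  have hmem2 : ∀ a ∈ l, ‖(u - a)/(ζ0 - a) - vc‖ ≤ r := by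
    intro a ha
    have haim : 0 ≤ a.im := him a ha
    have hza : ζ0 - a ≠ 0 := by
      intro h
      have := congrArg Complex.im h
      simp only [Complex.sub_im, Complex.zero_im] at this
      linarith
    have hsplit : (u - a)/(ζ0 - a) - vc = δ * ((ζ0 - a)⁻¹ - Complex.I / ((2*b:ℝ):ℂ)) := by
      rw [hvc, hδ]
      field_simp
      ring
    rw [hsplit, norm_mul]
    have hfrac : (ζ0 - a)⁻¹ - Complex.I / ((2*b:ℝ):ℂ)
        = (1 * ((2*b:ℝ):ℂ) - (ζ0 - a) * Complex.I) / ((ζ0 - a) * ((2*b:ℝ):ℂ)) := by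
      rw [← one_div, div_sub_div _ _ hza h2b]
    rw [hfrac, norm_div, norm_mul, Complex.norm_real, Real.norm_eq_abs, abs_of_pos (by positivity : (0:ℝ) < 2*b)]
    have hnum : ‖1 * ((2*b:ℝ):ℂ) - (ζ0 - a) * Complex.I‖ ≤ ‖ζ0 - a‖ := by
      rw [Complex.norm_def, Complex.norm_def]
      apply Real.sqrt_le_sqrt
      simp only [Complex.normSq_apply, Complex.sub_re, Complex.sub_im, Complex.mul_re,
        Complex.mul_im, Complex.I_re, Complex.I_im, Complex.ofReal_re, Complex.ofReal_im,
        Complex.one_re, Complex.one_im]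
      nlinarith [sq_nonneg (ζ0.re - a.re), hbpos, haim, hb]
    have habspos : 0 < ‖ζ0 - a‖ := norm_pos_iff.mpr hza
    calc ‖δ‖ * (‖1 * ((2*b:ℝ):ℂ) - (ζ0 - a) * Complex.I‖
          / (‖ζ0 - a‖ * (2*b)))
        ≤ ‖δ‖ * (‖ζ0 - a‖ / (‖ζ0 - a‖ * (2*b))) := by
          apply mul_le_mul_of_nonneg_left ?_ (norm_nonneg δ)
          exact (div_le_div_iff_of_pos_right (by positivity)).mpr hnum
      _ = ‖δ‖ / (2*b) := by
          rw [div_mul_eq_div_div, div_self (ne_of_gt habspos), one_div, div_eq_mul_inv]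
      _ = r := hr.symm
  -- assemble
  set T : List ℂ := List.replicate (n - l.length) 1 ++ (l.map fun a => (u - a)/(ζ0 - a)) with hT
  have hTsum : ((n : ℂ) - l.length) + (l.map fun a => (u - a)/(ζ0 - a)).sum = T.sum := by
    rw [hT, List.sum_append, List.sum_replicate, nsmul_eq_mul, mul_one]
    have : ((n - l.length : ℕ) : ℂ) = (n : ℂ) - l.length := by
      push_cast [Nat.cast_sub hd]; ring
    rw [this]
  have hTlen : T.length = n := by
    simp [hT, List.length_replicate, List.length_map]
    omega
  have hTmem : ∀ v ∈ T, ‖v - vc‖ ≤ r := by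
    intro v hv
    rw [hT, List.mem_append] at hv
    rcases hv with hv | hv
    · rw [List.eq_of_mem_replicate hv]; exact hmem1
    · obtain ⟨a, ha, rfl⟩ := List.mem_map.mp hv
      exact hmem2 a ha
  rw [hTsum]
  intro hzero
  have : ((starRingEnd ℂ) vc * T.sum).re = 0 := by rw [hzero]; simp
  have hges : c0 * n ≤ ((starRingEnd ℂ) vc * T.sum).re := by
    have hmulsum : (starRingEnd ℂ) vc * T.sum = (T.map fun v => (starRingEnd ℂ) vc * v).sum := by
      induction T with
      | nil => simp
      | cons x xs ih => simp [List.sum_cons, mul_add, ih]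
    rw [hmulsum, re_list_sum]
    have := list_sum_ge c0 ((T.map fun v => (starRingEnd ℂ) vc * v).map Complex.re) ?_
    · simpa [hTlen] using this
    · intro x hx
      simp only [List.mem_map] at hx
      obtain ⟨v, ⟨w, hw, rfl⟩, rfl⟩ := hx
      exact hdisk w (hTmem w hw)
  have hpos : (0:ℝ) < c0 * n := by
    have : (0:ℝ) < (n:ℝ) := by exact_mod_cast hn
    positivity
  linarith

/-- Laguerre-type lemma: if `φ` has no roots in the open lower half-plane, neither does
its polar derivative `n φ + (u - ζ) φ'` with respect to a point `u` in the lower half-plane. -/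
lemma laguerre {n : ℕ} (hn : 1 ≤ n) {φ : ℂ[X]} (hdeg : φ.natDegree ≤ n)
    (hφ : ∀ ζ : ℂ, ζ.im < 0 → eval ζ φ ≠ 0) {u ζ0 : ℂ} (hu : u.im < 0) (hζ : ζ0.im < 0) :
    (n : ℂ) * eval ζ0 φ + (u - ζ0) * eval ζ0 (derivative φ) ≠ 0 := by
  have hφ0 : φ ≠ 0 := by
    intro h
    exact hφ (-Complex.I) (by simp) (by simp [h])
  have hsp : Splits φ := IsAlgClosed.splits φ
  have heq := hsp.eq_prod_roots
  set lr : List ℂ := φ.roots.toList with hlr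
  have hcoe : (φ.roots.map fun a => X - C a).prod = (lr.map fun a => X - C a).prod := by
    rw [hlr, ← Multiset.coe_toList φ.roots, Multiset.map_coe, Multiset.prod_coe,
      Multiset.coe_toList]
  have heq' : φ = C φ.leadingCoeff * (lr.map fun a => X - C a).prod := by
    rw [← hcoe]; exact heq
  have him : ∀ a ∈ lr, 0 ≤ a.im := by
    intro a ha
    by_contra hlt
    push_neg at hlt
    have haroot : φ.eval a = 0 := by
      have : a ∈ φ.roots := Multiset.mem_toList.mp ha
      exact (mem_roots hφ0).mp this
    exact hφ a hlt haroot
  have hne : ∀ a ∈ lr, ζ0 ≠ a := by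
    intro a ha h
    have := him a ha
    rw [← h] at this
    linarith
  have hlen : lr.length ≤ n := by
    rw [hlr, Multiset.length_toList]
    calc φ.roots.card ≤ φ.natDegree := φ.card_roots'
    _ ≤ n := hdeg
  have hpe := polar_eval φ.leadingCoeff u ζ0 (n : ℂ) lr hne
  rw [heq']
  rw [hpe]
  apply mul_ne_zero
  · rw [← heq']; exact hφ ζ0 hζ
  · exact W_ne_zero hu hζ hn lr hlen him

/-- The polarization pairing. -/
noncomputable def polSum (n : ℕ) (φ : ℂ[X]) (l : List ℂ) : ℂ :=
  ∑ k ∈ Finset.range (n+1), φ.coeff k * esym k l * ((k.factorial * (n-k).factorial : ℕ) : ℂ)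

lemma psi_coeff (n : ℕ) (u : ℂ) (φ : ℂ[X]) (k : ℕ) :
    (C ((n:ℂ)+1) * φ + (C u - X) * derivative φ).coeff k
      = ((n:ℂ) + 1 - k) * φ.coeff k + u * (k+1) * φ.coeff (k+1) := by
  cases k with
  | zero =>
    simp only [coeff_add, coeff_C_mul, sub_mul, coeff_sub, mul_coeff_zero, coeff_X_zero,
      coeff_derivative, coeff_C_zero, zero_mul]
    push_cast
    ring
  | succ k =>
    simp only [coeff_add, coeff_C_mul, sub_mul, coeff_sub, coeff_X_mul, coeff_derivative,
      coeff_C_mul]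
    push_cast
    ring

lemma psi_natDegree {n : ℕ} {u : ℂ} {φ : ℂ[X]} (h : φ.natDegree ≤ n+1) :
    (C ((n:ℂ)+1) * φ + (C u - X) * derivative φ).natDegree ≤ n := by
  rw [natDegree_le_iff_coeff_eq_zero]
  intro m hm
  rw [psi_coeff]
  have h1 : φ.coeff (m+1) = 0 := coeff_eq_zero_of_natDegree_lt (by omega)
  rcases eq_or_lt_of_le (Nat.succ_le_of_lt hm) with he | hlt
  · rw [h1, ← he]
    push_cast
    ring
  · have h2 : φ.coeff m = 0 := coeff_eq_zero_of_natDegree_lt (by omega)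
    rw [h1, h2]
    ring

lemma polSum_cons (n : ℕ) (u : ℂ) (l : List ℂ) (hl : l.length = n) (φ : ℂ[X]) :
    polSum (n+1) φ (u :: l) = polSum n (C ((n:ℂ)+1) * φ + (C u - X) * derivative φ) l := by
  have hnd : esym (n+1) l = 0 := esym_eq_zero l (by omega)
  rw [polSum, polSum]
  have hR : ∑ k ∈ Finset.range (n+1),
        (C ((n:ℂ)+1) * φ + (C u - X) * derivative φ).coeff k * esym k l
          * ((k.factorial * (n-k).factorial : ℕ) : ℂ)
      = (∑ k ∈ Finset.range (n+1),
          ((n:ℂ) + 1 - k) * φ.coeff k * esym k l * ((k.factorial * (n-k).factorial : ℕ) : ℂ))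
        + ∑ k ∈ Finset.range (n+1),
            u * (k+1) * φ.coeff (k+1) * esym k l * ((k.factorial * (n-k).factorial : ℕ) : ℂ) := by
    rw [← Finset.sum_add_distrib]
    refine Finset.sum_congr rfl fun k hk => ?_
    rw [psi_coeff]
    ring
  rw [hR]
  rw [Finset.sum_range_succ' _ (n+1)]
  have hLsplit : ∑ i ∈ Finset.range (n+1),
        φ.coeff (i+1) * esym (i+1) (u :: l) * (((i+1).factorial * (n+1-(i+1)).factorial : ℕ) : ℂ)
      = (∑ i ∈ Finset.range (n+1),
          φ.coeff (i+1) * esym (i+1) l * (((i+1).factorial * (n-i).factorial : ℕ) : ℂ))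
        + ∑ i ∈ Finset.range (n+1),
            u * (i+1) * φ.coeff (i+1) * esym i l * ((i.factorial * (n-i).factorial : ℕ) : ℂ) := by
    rw [← Finset.sum_add_distrib]
    refine Finset.sum_congr rfl fun i hi => ?_
    rw [esym_cons, Nat.succ_sub_succ, Nat.factorial_succ]
    push_cast
    ring
  rw [hLsplit]
  have hA : ∑ k ∈ Finset.range (n+1),
        ((n:ℂ) + 1 - k) * φ.coeff k * esym k l * ((k.factorial * (n-k).factorial : ℕ) : ℂ)
      = (∑ i ∈ Finset.range n,
          φ.coeff (i+1) * esym (i+1) l * (((i+1).factorial * (n-i).factorial : ℕ) : ℂ))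
        + φ.coeff 0 * esym 0 (u :: l) * ((Nat.factorial 0 * (n+1-0).factorial : ℕ) : ℂ) := by
    rw [Finset.sum_range_succ' _ n]
    congr 1
    · refine Finset.sum_congr rfl fun i hi => ?_
      have hin : i < n := Finset.mem_range.mp hi
      have hm : n - i = (n - (i+1)) + 1 := by omega
      have hcast : ((n:ℂ) + 1 - ((i+1 : ℕ) : ℂ)) = (((n - (i+1)) + 1 : ℕ) : ℂ) := by
        have : ((n - (i+1) : ℕ) : ℂ) = (n : ℂ) - ((i+1 : ℕ) : ℂ) :=
          Nat.cast_sub (by omega)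
        push_cast [this]
        push_cast
        ring
      rw [hm, hcast, Nat.factorial_succ (n - (i+1))]
      push_cast
      ring
    · rw [esym_zero, esym_zero]
      simp only [Nat.sub_zero, Nat.factorial_succ, Nat.factorial_zero]
      push_cast
      ring
  rw [hA]
  have hfirst : ∑ i ∈ Finset.range (n+1),
        φ.coeff (i+1) * esym (i+1) l * (((i+1).factorial * (n-i).factorial : ℕ) : ℂ)
      = ∑ i ∈ Finset.range n,
          φ.coeff (i+1) * esym (i+1) l * (((i+1).factorial * (n-i).factorial : ℕ) : ℂ) := by
    rw [Finset.sum_range_succ, hnd]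
    simp
  rw [hfirst]
  ring

lemma psi_eval (n : ℕ) (u ζ : ℂ) (φ : ℂ[X]) :
    eval ζ (C ((n:ℂ)+1) * φ + (C u - X) * derivative φ)
    = ((n:ℂ)+1) * eval ζ φ + (u - ζ) * eval ζ (derivative φ) := by
  simp

/-- The Grace–Walsh–Szegő style statement: the polarization pairing of a polynomial with
no roots in the open lower half-plane does not vanish on points of the lower half-plane. -/
lemma polSum_ne_zero : ∀ (n : ℕ) (φ : ℂ[X]), φ.natDegree ≤ n →
    (∀ ζ : ℂ, ζ.im < 0 → eval ζ φ ≠ 0) → ∀ l : List ℂ, l.length = n →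
    (∀ x ∈ l, x.im < 0) → polSum n φ l ≠ 0 := by
  intro n
  induction n with
  | zero =>
    intro φ hdeg hφ l hl him
    have hps : polSum 0 φ l = φ.coeff 0 := by
      simp [polSum, esym_zero]
    rw [hps]
    have h := hφ (-Complex.I) (by simp)
    rwa [eq_C_of_natDegree_le_zero hdeg, eval_C] at h
  | succ n ih =>
    intro φ hdeg hφ l hl him
    cases l with
    | nil => simp at hl
    | cons u l' =>
      have hl' : l'.length = n := by simpa using hl
      have hu : u.im < 0 := him u (by simp)
      rw [polSum_cons n u l' hl' φ]
      apply ih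
      · exact psi_natDegree hdeg
      · intro ζ hζ
        rw [psi_eval]
        have hlag := laguerre (n := n+1) (by omega) hdeg hφ hu hζ
        have : ((n+1 : ℕ) : ℂ) = (n : ℂ) + 1 := by push_cast; ring
        rwa [this] at hlag
      · exact hl'
      · intro x hx
        exact him x (by simp [hx])

lemma iterate_deriv_linear (a : ℂ) (R : ℂ[X]) :
    ∀ j, derivative^[j+1] ((X - C a) * R)
      = (X - C a) * derivative^[j+1] R + C ((j:ℂ)+1) * derivative^[j] R := by
  intro j
  induction j with
  | zero =>
    simp [derivative_mul]
    ring
  | succ j ih =>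
    simp only [Function.iterate_succ_apply'] at ih ⊢
    rw [ih]
    simp only [derivative_add, derivative_mul, derivative_sub, derivative_X, derivative_C,
      sub_zero, one_mul, derivative_one]
    push_cast
    simp only [map_add, map_one]
    ring

lemma eval_iterate_deriv (z : ℂ) :
    ∀ (l : List ℂ), (∀ a ∈ l, z - a ≠ 0) → ∀ j,
      eval z (derivative^[j] ((l.map fun a => X - C a).prod))
        = (j.factorial : ℂ) * eval z ((l.map fun a => X - C a).prod)
            * esym j (l.map fun a => (z - a)⁻¹) := by
  intro l
  induction l with
  | nil =>
    intro _ j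
    cases j with
    | zero => simp [esym_zero]
    | succ j =>
      have h0 : derivative^[j+1] ((List.map (fun a => X - C a) ([] : List ℂ)).prod) = 0 := by
        simp only [List.map_nil, List.prod_nil]
        rw [Function.iterate_succ_apply]
        simp
      rw [h0]
      simp [esym_nil]
  | cons a l ih =>
    intro hne j
    have ha : z - a ≠ 0 := hne a (by simp)
    have ihl := ih (fun b hb => hne b (by simp [hb]))
    simp only [List.map_cons, List.prod_cons]
    cases j with
    | zero => simp [esym_zero]
    | succ j =>
      rw [iterate_deriv_linear]
      simp only [eval_add, eval_mul, eval_sub, eval_X, eval_C]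
      rw [ihl (j+1), ihl j, esym_cons]
      have hcancel : (z - a) * (z - a)⁻¹ = 1 := mul_inv_cancel₀ ha
      rw [Nat.factorial_succ (j)]
      push_cast
      linear_combination (-(((j:ℂ)+1) * (j.factorial : ℂ)
        * eval z ((l.map fun a => X - C a).prod) * esym j (l.map fun a => (z - a)⁻¹))) * hcancel


/-- The Walsh convolution `p ⊞_n q` of two (monic, degree `n`) real polynomials: writing
`p(z) = ∑ᵢ aᵢ z^{n-i}` and `q(z) = ∑ⱼ bⱼ z^{n-j}`, it is
`(p ⊞_n q)(z) = ∑_{k=0}^n z^{n-k} ∑_{i+j=k} ((n-i)!(n-j)!)/(n!(n-k)!) aᵢ bⱼ`;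
equivalently, `(p ⊞_n q)(z) = p̂(d/dz) q̂(d/dz) zⁿ` where `p̂(d/dz) zⁿ = p(z)`. -/
noncomputable def walshConv (n : ℕ) (p q : Polynomial ℝ) : Polynomial ℝ :=
  ∑ k ∈ Finset.range (n + 1),
    C (∑ ij ∈ Finset.HasAntidiagonal.antidiagonal k,
        (((n - ij.1).factorial * (n - ij.2).factorial : ℝ) /
            ((n.factorial * (n - k).factorial : ℕ) : ℝ)) *
          p.coeff (n - ij.1) * q.coeff (n - ij.2)) * X ^ (n - k)

/-! ### Monicity and degree -/

lemma walshConv_natDegree_le (n : ℕ) (p q : Polynomial ℝ) :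
    (walshConv n p q).natDegree ≤ n := by
  rw [walshConv]
  apply natDegree_sum_le_of_forall_le
  intro k hk
  refine natDegree_mul_le.trans ?_
  rw [natDegree_C, natDegree_X_pow, zero_add]
  simp only [Finset.mem_range] at hk
  omega

lemma walshConv_coeff_n (n : ℕ) (p q : Polynomial ℝ) (hpm : p.Monic) (hqm : q.Monic)
    (hpd : p.natDegree = n) (hqd : q.natDegree = n) :
    (walshConv n p q).coeff n = 1 := by
  have hp1 : p.coeff n = 1 := by rw [← hpd]; exact hpm.coeff_natDegree
  have hq1 : q.coeff n = 1 := by rw [← hqd]; exact hqm.coeff_natDegree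
  rw [walshConv, finset_sum_coeff]
  rw [Finset.sum_eq_single 0]
  · simp only [Nat.sub_zero, Finset.Nat.antidiagonal_zero, Finset.sum_singleton, hp1, hq1]
    rw [coeff_C_mul, coeff_X_pow, if_pos rfl]
    have hne : ((n.factorial * n.factorial : ℕ) : ℝ) ≠ 0 := by
      positivity
    push_cast at hne ⊢
    field_simp
  · intro k hk hk0
    rw [coeff_C_mul, coeff_X_pow, if_neg, mul_zero]
    simp only [Finset.mem_range] at hk
    omega
  · intro h
    simp at h

lemma walshConv_monic (n : ℕ) (p q : Polynomial ℝ) (hpm : p.Monic) (hqm : q.Monic)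
    (hpd : p.natDegree = n) (hqd : q.natDegree = n) :
    (walshConv n p q).Monic ∧ (walshConv n p q).natDegree = n := by
  have h1 := walshConv_natDegree_le n p q
  have h2 := walshConv_coeff_n n p q hpm hqm hpd hqd
  exact ⟨monic_of_natDegree_le_of_coeff_eq_one n h1 h2,
    le_antisymm h1 (le_natDegree_of_ne_zero (by rw [h2]; exact one_ne_zero))⟩

/-! ### Conjugation symmetry -/

lemma eval_map_conj (p : Polynomial ℝ) (z : ℂ) :
    eval ((starRingEnd ℂ) z) (p.map (algebraMap ℝ ℂ))
      = (starRingEnd ℂ) (eval z (p.map (algebraMap ℝ ℂ))) := by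
  rw [eval_map, eval_map, hom_eval₂]
  congr 1
  refine RingHom.ext fun r => ?_
  simp [Complex.conj_ofReal]

/-! ### The main nonvanishing result -/

lemma walsh_no_root_uhp (n : ℕ) (p q : Polynomial ℝ) (hpm : p.Monic) (hqm : q.Monic)
    (hpd : p.natDegree = n) (hqd : q.natDegree = n)
    (hpr : RealRooted p) (hqr : RealRooted q) {z : ℂ} (hz : 0 < z.im) :
    eval z ((walshConv n p q).map (algebraMap ℝ ℂ)) ≠ 0 := by
  set f := algebraMap ℝ ℂ with hf
  set P := p.map f with hPdef
  set Q := q.map f with hQdef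
  have hPm : P.Monic := hpm.map f
  have hPd : P.natDegree = n := by rw [hPdef, hpm.natDegree_map, hpd]
  have hQd : Q.natDegree = n := by rw [hQdef, hqm.natDegree_map, hqd]
  -- root list of P
  have hcard : P.roots.card = n := by
    rw [← hPd]
    exact (splits_iff_card_roots).mp (IsAlgClosed.splits P)
  have hprod : P = (P.roots.map fun a => X - C a).prod :=
    (IsAlgClosed.splits P).eq_prod_roots_of_monic hPm
  set lr : List ℂ := P.roots.toList with hlr
  have hlen : lr.length = n := by rw [hlr, Multiset.length_toList, hcard]
  have hprod' : P = (lr.map fun a => X - C a).prod := by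
    rw [hprod, hlr, ← Multiset.coe_toList P.roots, Multiset.map_coe, Multiset.prod_coe,
      Multiset.coe_toList]
  have hre : ∀ a ∈ lr, a.im = 0 := by
    intro a ha
    exact hpr a ((mem_roots hPm.ne_zero).mp (Multiset.mem_toList.mp ha))
  have hzne : ∀ a ∈ lr, z - a ≠ 0 := by
    intro a ha h
    have h1 := hre a ha
    have := congrArg Complex.im h
    simp only [Complex.sub_im, Complex.zero_im, h1] at this
    linarith
  set ul : List ℂ := lr.map fun a => (z - a)⁻¹ with hul
  have hullen : ul.length = n := by rw [hul, List.length_map, hlen]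
  have hulim : ∀ x ∈ ul, x.im < 0 := by
    intro x hx
    obtain ⟨a, ha, rfl⟩ := List.mem_map.mp hx
    rw [Complex.inv_im]
    have h1 : (z - a).im = z.im := by rw [Complex.sub_im, hre a ha, sub_zero]
    have h2 : 0 < Complex.normSq (z - a) := Complex.normSq_pos.mpr (hzne a ha)
    rw [h1]
    apply div_neg_of_neg_of_pos (by linarith) h2
  -- the reversed polynomial of Q
  set φ : ℂ[X] := ∑ j ∈ Finset.range (n+1), C (Q.coeff (n-j)) * X^j with hφ
  have hφdeg : φ.natDegree ≤ n := by
    rw [hφ]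
    apply natDegree_sum_le_of_forall_le
    intro j hj
    refine natDegree_mul_le.trans ?_
    simp only [natDegree_C, natDegree_X_pow, zero_add]
    simp only [Finset.mem_range] at hj
    omega
  have hφcoeff : ∀ k, k ≤ n → φ.coeff k = Q.coeff (n-k) := by
    intro k hk
    rw [hφ, finset_sum_coeff]
    simp only [coeff_C_mul, coeff_X_pow]
    rw [Finset.sum_eq_single k]
    · simp
    · intro j hj hjk
      rw [if_neg (fun h => hjk h.symm), mul_zero]
    · intro h
      exact absurd (Finset.mem_range.mpr (by omega)) h
  have hφeval : ∀ ζ : ℂ, ζ ≠ 0 → eval ζ φ = ζ^n * eval ζ⁻¹ Q := by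
    intro ζ hζ
    rw [hφ, eval_finset_sum]
    simp only [eval_mul, eval_pow, eval_C, eval_X]
    rw [eval_eq_sum_range' (show Q.natDegree < n+1 by omega), Finset.mul_sum]
    conv_rhs => rw [← Finset.sum_range_reflect]
    refine Finset.sum_congr rfl fun j hj => ?_
    simp only [Finset.mem_range] at hj
    have hj' : j ≤ n := by omega
    have h1 : n + 1 - 1 - j = n - j := by omega
    rw [h1]
    have h2 : ζ ^ n = ζ ^ j * ζ ^ (n - j) := by rw [← pow_add]; congr 1; omega
    have hc : ζ ^ (n-j) * (ζ ^ (n-j))⁻¹ = 1 := mul_inv_cancel₀ (pow_ne_zero _ hζ)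
    rw [h2, inv_pow]
    linear_combination (-(Q.coeff (n-j) * ζ^j)) * hc
  have hφne : ∀ ζ : ℂ, ζ.im < 0 → eval ζ φ ≠ 0 := by
    intro ζ hζim
    have hζ : ζ ≠ 0 := by
      intro h; rw [h] at hζim; simp at hζim
    rw [hφeval ζ hζ]
    apply mul_ne_zero (pow_ne_zero _ hζ)
    intro h
    have hroot : Q.IsRoot ζ⁻¹ := h
    have him0 := hqr ζ⁻¹ hroot
    rw [Complex.inv_im] at him0
    have h2 : 0 < Complex.normSq ζ := Complex.normSq_pos.mpr hζ
    have hpos : 0 < -ζ.im / Complex.normSq ζ := div_pos (by linarith) h2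
    rw [him0] at hpos
    exact lt_irrefl 0 hpos
  have hpol : polSum n φ ul ≠ 0 := polSum_ne_zero n φ hφdeg hφne ul hullen hulim
  have hPz : eval z P ≠ 0 := by
    rw [hprod', eval_list_prod]
    apply List.prod_ne_zero
    intro h0
    simp only [List.map_map, List.mem_map] at h0
    obtain ⟨a, ha, hae⟩ := h0
    simp only [Function.comp_apply, eval_sub, eval_X, eval_C] at hae
    exact hzne a ha hae
  -- the key identity
  have hkey : eval z ((walshConv n p q).map f) * (n.factorial : ℂ)
      = eval z P * polSum n φ ul := by
    have hA : eval z ((walshConv n p q).map f) * (n.factorial : ℂ)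
        = ∑ k ∈ Finset.range (n+1), ∑ i ∈ Finset.range (k+1),
            ((n-i).descFactorial (k-i) : ℂ) * ((n-(k-i)).factorial : ℂ)
              * (p.coeff (n-i) : ℂ) * (q.coeff (n-(k-i)) : ℂ) * z^(n-k) := by
      rw [walshConv, Polynomial.map_sum, eval_finset_sum, Finset.sum_mul]
      refine Finset.sum_congr rfl fun k hk => ?_
      simp only [Finset.mem_range] at hk
      rw [Polynomial.map_mul, Polynomial.map_pow, map_X, map_C, eval_mul, eval_pow, eval_X,
        eval_C, map_sum, Finset.Nat.sum_antidiagonal_eq_sum_range_succ_mk,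
        Finset.sum_mul, Finset.sum_mul]
      refine Finset.sum_congr rfl fun i hi => ?_
      simp only [Finset.mem_range] at hi
      have hfact : ((n-k).factorial : ℂ) * ((n-i).descFactorial (k-i) : ℂ)
          = ((n-i).factorial : ℂ) := by
        have h := Nat.factorial_mul_descFactorial (show k-i ≤ n-i by omega)
        rw [show (n-i)-(k-i) = n-k by omega] at h
        exact_mod_cast congrArg (Nat.cast : ℕ → ℂ) h
      have hn0 : ((n.factorial : ℕ) : ℂ) ≠ 0 := Nat.cast_ne_zero.mpr (Nat.factorial_ne_zero n)
      have hk0 : (((n-k).factorial : ℕ) : ℂ) ≠ 0 :=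
        Nat.cast_ne_zero.mpr (Nat.factorial_ne_zero _)
      rw [map_mul, map_mul, map_div₀, map_mul]
      simp only [hf, Complex.coe_algebraMap]
      push_cast
      field_simp
      linear_combination (-(((p.coeff (n-i) : ℂ)) * ((q.coeff (n-(k-i)) : ℂ)) * z^(n-k)
        * ((n-(k-i)).factorial : ℂ))) * hfact
    have hB : eval z P * polSum n φ ul
        = ∑ j ∈ Finset.range (n+1), ∑ m ∈ Finset.range (n-j+1),
            (q.coeff (n-j) : ℂ) * ((n-j).factorial : ℂ)
              * (((m+j).descFactorial j : ℂ) * (p.coeff (m+j) : ℂ) * z^m) := by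
      rw [polSum, Finset.mul_sum]
      refine Finset.sum_congr rfl fun j hj => ?_
      simp only [Finset.mem_range] at hj
      rw [hφcoeff j (by omega)]
      have hQc : Q.coeff (n-j) = ((q.coeff (n-j) : ℝ) : ℂ) := by
        rw [hQdef, Polynomial.coeff_map, hf, Complex.coe_algebraMap]
      have hiter : eval z (derivative^[j] P) = (j.factorial : ℂ) * eval z P * esym j ul := by
        conv_lhs => rw [hprod']
        conv_rhs => rw [hprod']
        exact eval_iterate_deriv z lr hzne j
      have hDcoeff : eval z (derivative^[j] P)
          = ∑ m ∈ Finset.range (n-j+1),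
              ((m+j).descFactorial j : ℂ) * (p.coeff (m+j) : ℂ) * z^m := by
        have hdlt : (derivative^[j] P).natDegree < n-j+1 :=
          lt_of_le_of_lt (le_trans (natDegree_iterate_derivative P j) (by omega : P.natDegree - j ≤ n - j)) (by omega)
        rw [eval_eq_sum_range' hdlt]
        refine Finset.sum_congr rfl fun m hm => ?_
        rw [Polynomial.coeff_iterate_derivative, nsmul_eq_mul, hPdef, Polynomial.coeff_map,
          hf, Complex.coe_algebraMap]
      calc eval z P * (Q.coeff (n-j) * esym j ul * ((j.factorial * (n-j).factorial : ℕ) : ℂ))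
          = ((q.coeff (n-j) : ℝ) : ℂ) * ((n-j).factorial : ℂ)
              * ((j.factorial : ℂ) * eval z P * esym j ul) := by
            rw [hQc]; push_cast; ring
        _ = ((q.coeff (n-j) : ℝ) : ℂ) * ((n-j).factorial : ℂ) * eval z (derivative^[j] P) := by
            rw [hiter]
        _ = _ := by
            rw [hDcoeff, Finset.mul_sum]
    have hC : (∑ k ∈ Finset.range (n+1), ∑ i ∈ Finset.range (k+1),
            ((n-i).descFactorial (k-i) : ℂ) * ((n-(k-i)).factorial : ℂ)
              * (p.coeff (n-i) : ℂ) * (q.coeff (n-(k-i)) : ℂ) * z^(n-k))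
        = ∑ j ∈ Finset.range (n+1), ∑ m ∈ Finset.range (n-j+1),
            (q.coeff (n-j) : ℂ) * ((n-j).factorial : ℂ)
              * (((m+j).descFactorial j : ℂ) * (p.coeff (m+j) : ℂ) * z^m) := by
      rw [Finset.sum_sigma', Finset.sum_sigma']
      refine Finset.sum_nbij' (fun ki => ⟨ki.1 - ki.2, n - ki.1⟩)
        (fun jm => ⟨n - jm.2, n - jm.2 - jm.1⟩) ?_ ?_ ?_ ?_ ?_
      · rintro ⟨k, i⟩ h
        simp only [Finset.mem_sigma, Finset.mem_range] at h ⊢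
        omega
      · rintro ⟨j, m⟩ h
        simp only [Finset.mem_sigma, Finset.mem_range] at h ⊢
        omega
      · rintro ⟨k, i⟩ h
        simp only [Finset.mem_sigma, Finset.mem_range] at h
        dsimp only at h ⊢
        have h2 : n - (n - k) - (k - i) = i := by omega
        have h1 : n - (n - k) = k := by omega
        rw [h2, h1]
      · rintro ⟨j, m⟩ h
        simp only [Finset.mem_sigma, Finset.mem_range] at h
        dsimp only at h ⊢
        have h2 : n - m - (n - m - j) = j := by omega
        have h1 : n - (n - m) = m := by omega
        rw [h2, h1]
      · rintro ⟨k, i⟩ h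
        simp only [Finset.mem_sigma, Finset.mem_range] at h
        dsimp only at h ⊢
        have he : n - k + (k - i) = n - i := by omega
        rw [he]
        ring
    rw [hA, hB, hC]
  intro h
  rw [h, zero_mul] at hkey
  exact (mul_ne_zero hPz hpol) hkey.symm


/-- **Walsh (1922)**: the Walsh convolution of two monic real-rooted polynomials of degree
`n` is a monic real-rooted polynomial of degree `n`. -/
theorem walsh_convolution_real_rooted (n : ℕ) (p q : Polynomial ℝ)
    (hpm : p.Monic) (hqm : q.Monic) (hpd : p.natDegree = n) (hqd : q.natDegree = n)
    (hpr : RealRooted p) (hqr : RealRooted q) :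
    (walshConv n p q).Monic ∧ (walshConv n p q).natDegree = n ∧
      RealRooted (walshConv n p q) := by
  obtain ⟨hm, hd⟩ := walshConv_monic n p q hpm hqm hpd hqd
  refine ⟨hm, hd, ?_⟩
  intro z hroot
  by_contra him
  rcases lt_or_gt_of_ne him with hlt | hgt
  · have h2 : ((walshConv n p q).map (algebraMap ℝ ℂ)).eval ((starRingEnd ℂ) z) = 0 := by
      rw [eval_map_conj]
      rw [show ((walshConv n p q).map (algebraMap ℝ ℂ)).eval z = 0 from hroot]
      simp
    have h3 : 0 < ((starRingEnd ℂ) z).im := by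
      rw [Complex.conj_im]
      linarith
    exact walsh_no_root_uhp n p q hpm hqm hpd hqd hpr hqr h3 h2
  · exact walsh_no_root_uhp n p q hpm hqm hpd hqd hpr hqr hgt hroot
end
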